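/- arXiv:2101.01591 — 7 statements merged into one kernel-verified Lean document; each statement's English description precedes it below -/
import Mathlib

section
/- Let d ≥ 1 and let T be a finite subset of ℝ^d whose affine span has dimension d. Then the number of (d+1)-element subsets R of T whose affine span has dimension d is at least |T|/2^d. -/
/-! Fix `p ∈ T`. Since `T` spans the space, the vectors `t -ᵥ p` (`t ∈ T`) contain a basis, and `p`
together with the corresponding points is a full-dimensional set of `d + 1` points of `T` through
`p`. So the full-dimensional `(d + 1)`-subsets of `T` cover `T`, and there are at least
`|T| / (d + 1) ≥ |T| / 2 ^ d` of them. -/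

open scoped Classical

noncomputable section

/-- The zero set in `ℝ × ℝ` of a polynomial in two variables. -/
def zeroSet (p : MvPolynomial (Fin 2) ℝ) : Set (ℝ × ℝ) :=
  {x | MvPolynomial.eval ![x.1, x.2] p = 0}

/-- `C` is a curve of degree `e`: the zero set of a polynomial of total degree `e`. -/
def IsCurve (e : ℕ) (C : Set (ℝ × ℝ)) : Prop :=
  ∃ p : MvPolynomial (Fin 2) ℝ, p.totalDegree = e ∧ C = zeroSet p

/-- `C` is a curve of degree at most `d` (and at least `1`). -/
def IsCurveLe (d : ℕ) (C : Set (ℝ × ℝ)) : Prop :=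
  ∃ e, 1 ≤ e ∧ e ≤ d ∧ IsCurve e C

/-- Index set for the `d`-Veronese map: pairs `(n, m)` with `1 ≤ n + m ≤ d`.
It has `(d+2).choose 2 - 1` elements. -/
abbrev VIdx (d : ℕ) : Type :=
  {q : Fin (d + 1) × Fin (d + 1) // 1 ≤ (q.1 : ℕ) + (q.2 : ℕ) ∧ (q.1 : ℕ) + (q.2 : ℕ) ≤ d}

/-- The `d`-Veronese map `ℝ² → ℝ^((d+2).choose 2 - 1)`. -/
def vero (d : ℕ) (a : ℝ × ℝ) : VIdx d → ℝ :=
  fun q => a.1 ^ (q.1.1 : ℕ) * a.2 ^ (q.1.2 : ℕ)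

/-- Dimension of the affine hull of a set. -/
noncomputable def adim {α : Type*} (S : Set (α → ℝ)) : ℕ :=
  Module.finrank ℝ (affineSpan ℝ S).direction

/-- Dimension of an affine subspace. -/
noncomputable def fdim {α : Type*} (F : AffineSubspace ℝ (α → ℝ)) : ℕ :=
  Module.finrank ℝ F.direction

open Finset

section AffineSpace

variable {k V P : Type*} [DivisionRing k] [AddCommGroup V] [Module k V] [AddTorsor V P]

theorem exists_affineIndependent_mem_affineSpan_eq_top {s : Set P} (hs : affineSpan k s = ⊤)
    {p : P} (hp : p ∈ s) :
    ∃ t ⊆ s, p ∈ t ∧ AffineIndependent k ((↑) : t → P) ∧ affineSpan k t = ⊤ := by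
  have hspan : Submodule.span k ((· -ᵥ p) '' s) = ⊤ := by
    rw [← vectorSpan_eq_span_vsub_set_right k hp, ← direction_affineSpan, hs,
      AffineSubspace.direction_top]
  obtain ⟨b, hbs, hbspan, hb⟩ := exists_linearIndependent k ((· -ᵥ p) '' s)
  have hb0 : ∀ v ∈ b, v ≠ 0 := fun v hv => hb.ne_zero ⟨v, hv⟩
  refine ⟨{p} ∪ (· +ᵥ p) '' b, ?_, .inl rfl,
    (linearIndependent_set_iff_affineIndependent_vadd_union_singleton k hb0 p).mp hb,
    affineSpan_singleton_union_vadd_eq_top_of_span_eq_top p (by rwa [Subtype.range_coe, hbspan])⟩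
  rintro _ (rfl | ⟨_, hv, rfl⟩)
  · exact hp
  · obtain ⟨x, hx, rfl⟩ := hbs hv
    simpa only [vsub_vadd] using hx

theorem Finset.exists_subset_card_eq_affineSpan_eq_top [FiniteDimensional k V] {T : Finset P}
    (hT : affineSpan k (T : Set P) = ⊤) {p : P} (hp : p ∈ T) :
    ∃ R ⊆ T, #R = Module.finrank k V + 1 ∧ affineSpan k (R : Set P) = ⊤ ∧ p ∈ R := by
  obtain ⟨t, htT, hpt, hind, htop⟩ := exists_affineIndependent_mem_affineSpan_eq_top hT hp
  obtain ⟨R, rfl⟩ := (T.finite_toSet.subset htT).exists_finset_coe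
  refine ⟨R, coe_subset.mp htT, ?_, htop, hpt⟩
  rw [← Subtype.range_coe (s := (R : Set P))] at htop
  simpa using (hind.affineSpan_eq_top_iff_card_eq_finrank_add_one).mp htop

theorem Finset.card_le_mul_card_filter_affineSpan_eq_top [FiniteDimensional k V] {T : Finset P}
    (hT : affineSpan k (T : Set P) = ⊤) :
    #T ≤ #((T.powersetCard (Module.finrank k V + 1)).filter
      fun R : Finset P => affineSpan k (R : Set P) = ⊤) * (Module.finrank k V + 1) := by
  refine (card_le_card fun p hp => ?_).trans (card_biUnion_le_card_mul _ id _
    fun R hR => (mem_powersetCard.mp (mem_filter.mp hR).1).2.le)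
  obtain ⟨R, hRT, hcard, htop, hpR⟩ := T.exists_subset_card_eq_affineSpan_eq_top hT hp
  exact mem_biUnion.mpr ⟨R, by simp [hRT, hcard, htop], hpR⟩

end AffineSpace

theorem adim_eq_card_iff_affineSpan_eq_top {α : Type*} [Fintype α] {S : Set (α → ℝ)}
    (hS : S.Nonempty) : adim S = Fintype.card α ↔ affineSpan ℝ S = ⊤ := by
  rw [adim, ← AffineSubspace.direction_eq_top_iff_of_nonempty (hS.mono (subset_affineSpan ℝ S)),
    Submodule.eq_top_iff_finrank_eq, Module.finrank_fintype_fun_eq_card]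

theorem stmt_0_general (d : ℕ) (T : Finset (Fin d → ℝ))
    (hT : adim (T : Set (Fin d → ℝ)) = d) :
    (T.card : ℝ) / 2 ^ d ≤
      (((T.powersetCard (d + 1)).filter
        (fun R => adim (R : Set (Fin d → ℝ)) = d)).card : ℝ) := by
  rcases T.eq_empty_or_nonempty with rfl | hTne
  · simp
  have hadim {S : Set (Fin d → ℝ)} (hS : S.Nonempty) : adim S = d ↔ affineSpan ℝ S = ⊤ := by
    simpa using adim_eq_card_iff_affineSpan_eq_top hS
  have hcount := T.card_le_mul_card_filter_affineSpan_eq_top ((hadim (by simpa using hTne)).mp hT)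
  rw [Module.finrank_fin_fun] at hcount
  -- the filter in the statement runs over `Finset (Set _)`: the coercion of the
  -- `(d + 1)`-subsets to sets is elaborated as a monadic bind
  have hfull : ((T.powersetCard (d + 1)).filter
      fun R => adim (R : Set (Fin d → ℝ)) = d) =
      ((T.powersetCard (d + 1)).filter
        fun R : Finset (Fin d → ℝ) => affineSpan ℝ (R : Set (Fin d → ℝ)) = ⊤).image (↑) := by
    simp only [bind_def, pure_def, sup_singleton_apply, filter_image]
    exact congrArg _ (filter_congr fun R hR => hadim (coe_nonempty.mpr
      (card_pos.mp (by simp [(mem_powersetCard.mp hR).2]))))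
  rw [hfull, card_image_of_injective _ coe_injective, div_le_iff₀ (by positivity)]
  exact_mod_cast hcount.trans (Nat.mul_le_mul_left _ Nat.lt_two_pow_self)

theorem stmt_0 (d : ℕ) (hd : 1 ≤ d) (T : Finset (Fin d → ℝ))
    (hT : adim (T : Set (Fin d → ℝ)) = d) :
    (T.card : ℝ) / 2 ^ d ≤
      (((T.powersetCard (d + 1)).filter
        (fun R => adim (R : Set (Fin d → ℝ)) = d)).card : ℝ) :=
  stmt_0_general d T hT
end
end

section
/- Let e ≥ 1, f ≥ 0 with e ≥ f, let F be a proper affine flat in ℝ^(binom(e+2,2)−1), and let A ⊆ ℝ^2 with |A| = binom(f+2,2) such that A is not contained in any curve of degree at most f. Then |ψ_e(A) ∩ F| ≤ 1 + dim F. -/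
/-!
A nonzero polynomial of degree at most `f` cannot vanish on `A`: if nonconstant, it would cut out
a curve of degree at most `f` containing `A`. So evaluation on `A` is injective on the space of such
polynomials; as `|A|` equals the dimension of that space it is bijective, and every `a ∈ A` has a
Lagrange polynomial of degree `≤ f ≤ e` that is `1` at `a` and `0` on the rest of `A`.
Polynomials of degree `≤ e` are affine functions composed with `ψ_e`, so each point of `ψ_e(A)` is
separated from the others by an affine functional. Hence `ψ_e(A)` is affinely independent, and an
affinely independent subset of `F` has at most `1 + dim F` points.
-/

open scoped Classical

noncomputable section

open MvPolynomial

section AffineIndependence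

variable {k V : Type*} [Field k] [AddCommGroup V] [Module k V]

theorem affineIndependent_of_forall_exists_affineMap {T : Set V}
    (h : ∀ x ∈ T, ∃ g : V →ᵃ[k] k, g x = 1 ∧ ∀ y ∈ T, y ≠ x → g y = 0) :
    AffineIndependent k ((↑) : T → V) := by
  choose! g hg using h
  refine AffineIndependent.of_comp (AffineMap.pi fun x : T => g x) ?_
  have hδ : AffineMap.pi (fun x : T => g x) ∘ (↑) = fun y : T => Pi.single y (1 : k) := by
    ext y x
    rw [Pi.single_apply]
    split_ifs with hxy
    · simp [hxy, (hg y y.2).1]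
    · exact (hg x x.2).2 y y.2 fun h => hxy (Subtype.ext h.symm)
  rw [hδ]
  exact (Pi.linearIndependent_single_one T k).affineIndependent

theorem Set.ncard_le_one_add_finrank_direction [FiniteDimensional k V] {T : Set V}
    (hT : T.Finite) (hind : AffineIndependent k ((↑) : T → V)) {F : AffineSubspace k V}
    (hTF : T ⊆ F) :
    T.ncard ≤ 1 + Module.finrank k F.direction := by
  have := hT.fintype
  calc T.ncard = Fintype.card T := by rw [← Nat.card_coe_set_eq, Nat.card_eq_fintype_card]
    _ ≤ Module.finrank k (vectorSpan k (Set.range ((↑) : T → V))) + 1 := hind.card_le_finrank_succ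
    _ ≤ Module.finrank k F.direction + 1 := by
      gcongr
      rw [Subtype.range_coe, AffineSubspace.direction_eq_vectorSpan]
      exact Submodule.finrank_mono (vectorSpan_mono k hTF)
    _ = 1 + Module.finrank k F.direction := add_comm _ _

end AffineIndependence

theorem sum_range_succ_eq_choose_two (n : ℕ) :
    ∑ i ∈ Finset.range n, (i + 1) = (n + 1).choose 2 := by
  induction n with
  | zero => simp
  | succ n ih => rw [Finset.sum_range_succ, ih, Nat.choose_succ_succ' (n + 1) 1]; simp [add_comm]

theorem natCard_add_le_eq_choose (d : ℕ) :
    Nat.card {p : ℕ × ℕ // p.1 + p.2 ≤ d} = (d + 2).choose 2 := by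
  have hset : {p : ℕ × ℕ | p.1 + p.2 ≤ d} =
      ↑((Finset.range (d + 1) ×ˢ Finset.range (d + 1)).filter fun p => p.1 + p.2 ≤ d) := by
    ext p
    simp only [Set.mem_ofPred_eq, Finset.coe_filter, Finset.mem_product, Finset.mem_range]
    omega
  have hrow : ∀ i ∈ Finset.range (d + 1),
      ((Finset.range (d + 1)).filter fun j => i + j ≤ d).card = d - i + 1 := by
    intro i hi
    rw [← Finset.card_range (d - i + 1)]
    congr 1
    ext j
    simp only [Finset.mem_filter, Finset.mem_range] at hi ⊢
    omega
  rw [← Set.coe_ofPred, Nat.card_coe_set_eq, hset, Set.ncard_coe_finset, Finset.card_filter,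
    Finset.sum_product]
  simp_rw [← Finset.card_filter]
  rw [Finset.sum_congr rfl hrow, ← sum_range_succ_eq_choose_two, ← Finset.sum_range_reflect]
  refine Finset.sum_congr rfl fun i hi => ?_
  simp only [Finset.mem_range] at hi
  omega

theorem finrank_restrictTotalDegree_fin_two (d : ℕ) :
    Module.finrank ℝ (restrictTotalDegree (Fin 2) ℝ d) = (d + 2).choose 2 := by
  rw [restrictTotalDegree, Module.finrank_eq_nat_card_basis (basisRestrictSupport ℝ _),
    ← natCard_add_le_eq_choose]
  refine Nat.card_congr ((Finsupp.equivFunOnFinite.trans (finTwoArrowEquiv ℕ)).subtypeEquiv ?_)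
  intro s
  simp [Finsupp.sum_fintype]

def evalOn (d : ℕ) (A : Finset (ℝ × ℝ)) : restrictTotalDegree (Fin 2) ℝ d →ₗ[ℝ] (A → ℝ) where
  toFun p a := eval ![a.1.1, a.1.2] p.1
  map_add' _ _ := by ext; simp
  map_smul' _ _ := by ext; simp

theorem evalOn_injective {d : ℕ} {A : Finset (ℝ × ℝ)} (hne : A.Nonempty)
    (hA : ∀ C : Set (ℝ × ℝ), IsCurveLe d C → ¬(↑A ⊆ C)) : Function.Injective (evalOn d A) := by
  rw [← LinearMap.ker_eq_bot, LinearMap.ker_eq_bot']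
  rintro ⟨p, hp⟩ hvan
  have hzero : ∀ a ∈ A, eval ![a.1, a.2] p = 0 := fun a ha => congrFun hvan ⟨a, ha⟩
  rw [mem_restrictTotalDegree] at hp
  obtain hconst | hpos := Nat.eq_zero_or_pos p.totalDegree
  · obtain ⟨a, ha⟩ := hne
    rw [totalDegree_eq_zero_iff_eq_C] at hconst
    have hcoeff := hzero a ha
    rw [hconst, eval_C] at hcoeff
    rw [Submodule.mk_eq_zero, hconst, hcoeff, C_0]
  · exact absurd (fun a ha => hzero a ha) (hA (zeroSet p) ⟨_, hpos, hp, p, rfl, rfl⟩)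

theorem exists_lagrange_poly {d : ℕ} {A : Finset (ℝ × ℝ)} (hcard : A.card = (d + 2).choose 2)
    (hA : ∀ C : Set (ℝ × ℝ), IsCurveLe d C → ¬(↑A ⊆ C)) {a : ℝ × ℝ} (ha : a ∈ A) :
    ∃ p : MvPolynomial (Fin 2) ℝ, p.totalDegree ≤ d ∧
      ∀ b ∈ A, eval ![b.1, b.2] p = if b = a then 1 else 0 := by
  have hsurj := (LinearMap.injective_iff_surjective_of_finrank_eq_finrank (by
    rw [finrank_restrictTotalDegree_fin_two, Module.finrank_fintype_fun_eq_card,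
      Fintype.card_coe, hcard])).mp (evalOn_injective ⟨a, ha⟩ hA)
  obtain ⟨⟨p, hp⟩, hpa⟩ := hsurj (Pi.single ⟨a, ha⟩ 1)
  refine ⟨p, (mem_restrictTotalDegree _ _ _).mp hp, fun b hb => ?_⟩
  simpa [evalOn, Pi.single_apply, Subtype.ext_iff] using congrFun hpa ⟨b, hb⟩

theorem exists_affineMap_vero_eq_monomial (e : ℕ) {n m : ℕ} (hnm : n + m ≤ e) (c : ℝ) :
    ∃ g : (VIdx e → ℝ) →ᵃ[ℝ] ℝ, ∀ x, g (vero e x) = c * (x.1 ^ n * x.2 ^ m) := by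
  rcases Nat.eq_zero_or_pos (n + m) with h0 | hpos
  · refine ⟨AffineMap.const ℝ _ c, fun x => ?_⟩
    simp [show n = 0 by omega, show m = 0 by omega]
  · let v : VIdx e := ⟨(⟨n, by omega⟩, ⟨m, by omega⟩), hpos, hnm⟩
    exact ⟨c • (LinearMap.proj v : (VIdx e → ℝ) →ₗ[ℝ] ℝ).toAffineMap, fun x => rfl⟩

theorem exists_affineMap_vero_eq_eval {e : ℕ} {p : MvPolynomial (Fin 2) ℝ}
    (hp : p.totalDegree ≤ e) :
    ∃ g : (VIdx e → ℝ) →ᵃ[ℝ] ℝ, ∀ x, g (vero e x) = eval ![x.1, x.2] p := by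
  have hmono : ∀ s ∈ p.support, ∃ g : (VIdx e → ℝ) →ᵃ[ℝ] ℝ,
      ∀ x, g (vero e x) = eval ![x.1, x.2] (monomial s (coeff s p)) := by
    intro s hs
    have hdeg : s 0 + s 1 ≤ e := by
      simpa [Finsupp.sum_fintype] using (le_totalDegree hs).trans hp
    simpa [eval_monomial, Finsupp.prod_fintype] using
      exists_affineMap_vero_eq_monomial e hdeg (coeff s p)
  choose! g hg using hmono
  refine ⟨∑ s ∈ p.support, g s, fun x => ?_⟩
  let evalAt : ((VIdx e → ℝ) →ᵃ[ℝ] ℝ) →+ ℝ := AddMonoidHom.mk' (· (vero e x)) fun _ _ => rfl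
  calc (∑ s ∈ p.support, g s) (vero e x) = ∑ s ∈ p.support, g s (vero e x) := map_sum evalAt _ _
    _ = eval ![x.1, x.2] p := by
        conv_rhs => rw [p.as_sum, map_sum]
        exact Finset.sum_congr rfl fun s hs => hg s hs x

theorem stmt_6_general (e f : ℕ) (hfe : f ≤ e)
    (F : AffineSubspace ℝ (VIdx e → ℝ))
    (A : Finset (ℝ × ℝ)) (hcard : A.card = Nat.choose (f + 2) 2)
    (hA : ∀ C : Set (ℝ × ℝ), IsCurveLe f C → ¬(↑A ⊆ C)) :
    (vero e '' ↑A ∩ ↑F).ncard ≤ 1 + fdim F := by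
  refine Set.ncard_le_one_add_finrank_direction ((A.finite_toSet.image _).inter_of_left _) ?_
    Set.inter_subset_right
  refine affineIndependent_of_forall_exists_affineMap ?_
  rintro _ ⟨⟨a, ha, rfl⟩, -⟩
  obtain ⟨p, hp, hpA⟩ := exists_lagrange_poly hcard hA ha
  obtain ⟨g, hg⟩ := exists_affineMap_vero_eq_eval (hp.trans hfe)
  refine ⟨g, by simp [hg, hpA a ha], ?_⟩
  rintro _ ⟨⟨b, hb, rfl⟩, -⟩ hba
  rw [hg, hpA b hb, if_neg (by rintro rfl; exact hba rfl)]

theorem stmt_6 (e f : ℕ) (he : 1 ≤ e) (hfe : f ≤ e)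
    (F : AffineSubspace ℝ (VIdx e → ℝ)) (hF : F ≠ ⊤)
    (A : Finset (ℝ × ℝ)) (hcard : A.card = Nat.choose (f + 2) 2)
    (hA : ∀ C : Set (ℝ × ℝ), IsCurveLe f C → ¬(↑A ⊆ C)) :
    (vero e '' ↑A ∩ ↑F).ncard ≤ 1 + fdim F :=
  stmt_6_general e f hfe F A hcard hA
end
end

section
/- Let e ≥ 1, f > e, let F be a proper affine flat in ℝ^(binom(e+2,2)−1), and let A ⊆ ℝ^2 with |A| = binom(f+2,2) such that A is not contained in any curve of degree at most f. Then |ψ_e(A) ∩ F| ≤ binom(f+2,2) − binom(f−e+2,2) − binom(e+2,2) + 2 + dim F. -/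
open scoped Classical

noncomputable section

/-!
Let `S ⊆ A` be the points whose Veronese image lies in `F`. Affine functions vanishing on `F`,
composed with `ψ_e`, form a space `V` of polynomials of degree `≤ e` vanishing on `S`, of
dimension `binom(e+2,2) - 1 - dim F`. Pick `0 ≠ p₀ ∈ V`, of degree `d ≤ e`. The multiples
`M = p₀ · Poly_{≤ f-d}` also vanish on `S`, and `M ∩ V ⊆ p₀ · Poly_{≤ e-d}`. Since `A` lies on
no curve of degree `≤ f`, evaluation at `A \ S` is injective on `M + V ⊆ Poly_{≤ f}`, so
`dim M + dim V - dim (M ∩ V) ≤ |A| - |S|`, and the binomial identity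
`binom(f-d+2,2) - binom(e-d+2,2) = binom(f-e+2,2) - 1 + (e-d)(f-e)` finishes the count.
-/

open MvPolynomial Module Finset

theorem Nat.choose_two_add_choose_two_le (g t : ℕ) :
    (g + 2).choose 2 + (t + 2).choose 2 ≤ (g + t + 2).choose 2 + 1 := by
  have key : ((g + 2).choose 2 + (t + 2).choose 2 + t * g : ℚ) = (g + t + 2).choose 2 + 1 := by
    push_cast [Nat.cast_choose_two]
    ring
  have : (g + 2).choose 2 + (t + 2).choose 2 + t * g = (g + t + 2).choose 2 + 1 := by
    exact_mod_cast key
  omega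

def pairsSumLe (m : ℕ) : Finset (ℕ × ℕ) := (range (m + 1)).biUnion antidiagonal

theorem mem_pairsSumLe {m : ℕ} {x : ℕ × ℕ} : x ∈ pairsSumLe m ↔ x.1 + x.2 ≤ m := by
  simp [pairsSumLe]

theorem card_pairsSumLe (m : ℕ) : #(pairsSumLe m) = (m + 2).choose 2 := by
  rw [pairsSumLe, card_biUnion]
  · simpa using Nat.sum_range_add_choose m 1
  · intro i _ j _ hij
    exact disjoint_left.2 fun x hi hj =>
      hij ((mem_antidiagonal.1 hi).symm.trans (mem_antidiagonal.1 hj))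

theorem finrank_restrictTotalDegree_fin_two_s7 (K : Type*) [Field K] (m : ℕ) :
    finrank K (restrictTotalDegree (Fin 2) K m) = (m + 2).choose 2 := by
  let exps : {n : Fin 2 →₀ ℕ | (n.sum fun _ e => e) ≤ m} ≃ pairsSumLe m :=
    (Finsupp.equivFunOnFinite.trans (finTwoArrowEquiv ℕ)).subtypeEquiv fun n => by
      simp [mem_pairsSumLe, Finsupp.sum_fintype]
  rw [restrictTotalDegree, finrank_eq_nat_card_basis (basisRestrictSupport K _),
    Nat.card_congr exps, Nat.card_eq_fintype_card, Fintype.card_coe, card_pairsSumLe]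

theorem card_vIdx_add_one (e : ℕ) : Fintype.card (VIdx e) + 1 = (e + 2).choose 2 := by
  rw [Fintype.card_subtype, ← card_pairsSumLe, ← card_erase_add_one (s := pairsSumLe e)
    (mem_pairsSumLe (x := (0, 0)).2 (Nat.zero_le e)), add_left_inj]
  refine card_bij (fun q _ => ((q.1 : ℕ), (q.2 : ℕ))) ?_ ?_ ?_
  · intro q hq
    simp only [mem_filter, mem_univ, true_and] at hq
    simp only [mem_erase, ne_eq, Prod.mk.injEq, mem_pairsSumLe]
    omega
  · intro q _ q' _ h
    simp only [Prod.mk.injEq] at h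
    exact Prod.ext (Fin.ext h.1) (Fin.ext h.2)
  · intro x hx
    simp only [mem_erase, ne_eq, Prod.ext_iff, mem_pairsSumLe] at hx
    refine ⟨(⟨x.1, by omega⟩, ⟨x.2, by omega⟩), ?_, rfl⟩
    simp only [mem_filter, mem_univ, true_and]
    omega

theorem finrank_add_card_le_card {K P X : Type*} [Field K] [AddCommGroup P] [Module K P]
    (ev : X → P →ₗ[K] K) {W : Submodule K P} {A S : Finset X} (hSA : S ⊆ A)
    (hsep : ∀ p ∈ W, (∀ a ∈ A, ev a p = 0) → p = 0) (hvan : ∀ p ∈ W, ∀ a ∈ S, ev a p = 0) :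
    finrank K W + #S ≤ #A := by
  let restrict : W →ₗ[K] (A \ S : Finset X) → K := LinearMap.pi fun a => (ev a).comp W.subtype
  have hinj : Function.Injective restrict := by
    refine (injective_iff_map_eq_zero _).2 fun p hp => Subtype.ext (hsep p p.2 fun a ha => ?_)
    by_cases haS : a ∈ S
    · exact hvan p p.2 a haS
    · exact congrFun hp ⟨a, mem_sdiff.2 ⟨ha, haS⟩⟩
  have := LinearMap.finrank_le_finrank_of_injective hinj
  rw [finrank_fintype_fun_eq_card, Fintype.card_coe, card_sdiff_of_subset hSA] at this
  have := card_le_card hSA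
  omega

theorem ncard_image_inter_le_card_filter {α β : Type*} (g : α → β)
    (A : Finset α) (t : Set β) [DecidablePred (g · ∈ t)] :
    (g '' ↑A ∩ t).ncard ≤ #(A.filter (g · ∈ t)) := by
  rw [← Set.image_inter_preimage, ← Set.ncard_coe_finset, coe_filter]
  exact Set.ncard_image_le (Set.toFinite _)

theorem Module.Dual.apply_eq_sum_mul {ι K : Type*} [CommSemiring K] [Fintype ι] [DecidableEq ι]
    (φ : Module.Dual K (ι → K)) (x : ι → K) : φ x = ∑ i, x i * φ (Pi.single i 1) := by
  rw [LinearMap.pi_apply_eq_sum_univ φ x]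
  congr! with i - j
  simp [Pi.single_apply, eq_comm]

theorem fdim_lt_card {ι : Type*} [Fintype ι] {F : AffineSubspace ℝ (ι → ℝ)} (hF : F ≠ ⊤)
    (hne : (F : Set (ι → ℝ)).Nonempty) : fdim F < Fintype.card ι := by
  rw [fdim, ← finrank_fintype_fun_eq_card ℝ]
  exact Submodule.finrank_lt fun h =>
    hF ((AffineSubspace.direction_eq_top_iff_of_nonempty hne).1 h)

section
variable {σ R K : Type*} [CommSemiring R] [Field K]

theorem restrictTotalDegree_mono {m n : ℕ} (hmn : m ≤ n) :
    restrictTotalDegree σ R m ≤ restrictTotalDegree σ R n := fun p hp => by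
  rw [mem_restrictTotalDegree] at hp ⊢
  exact hp.trans hmn

theorem mul_mem_restrictTotalDegree {m n : ℕ} {p q : MvPolynomial σ R}
    (hp : p ∈ restrictTotalDegree σ R m) (hq : q ∈ restrictTotalDegree σ R n) :
    p * q ∈ restrictTotalDegree σ R (m + n) := by
  rw [mem_restrictTotalDegree] at hp hq ⊢
  exact (totalDegree_mul p q).trans (add_le_add hp hq)

theorem mem_restrictTotalDegree_of_mul_mem {S : Type*} [CommRing S] [IsDomain S] {n : ℕ}
    {p q : MvPolynomial σ S} (hp : p ≠ 0) (hpq : p * q ∈ restrictTotalDegree σ S n) :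
    q ∈ restrictTotalDegree σ S (n - p.totalDegree) := by
  rcases eq_or_ne q 0 with rfl | hq
  · exact zero_mem _
  rw [mem_restrictTotalDegree, totalDegree_mul_of_isDomain hp hq] at *
  omega

theorem finrank_map_mulLeft {p : MvPolynomial σ K} (hp : p ≠ 0)
    (W : Submodule K (MvPolynomial σ K)) :
    finrank K (W.map (LinearMap.mulLeft K p)) = finrank K W :=
  (Submodule.equivMapOfInjective _ (mul_right_injective₀ hp) W).finrank_eq.symm

end

section
variable {K : Type*} [Field K]

def evalAt (a : K × K) : MvPolynomial (Fin 2) K →ₗ[K] K := (aeval ![a.1, a.2]).toLinearMap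

@[simp]
theorem evalAt_apply (a : K × K) (p : MvPolynomial (Fin 2) K) :
    evalAt a p = eval ![a.1, a.2] p :=
  rfl

theorem card_add_finrank_add_choose_le {e f : ℕ} (hef : e ≤ f) {A S : Finset (K × K)} (hSA : S ⊆ A)
    (hsep : ∀ p ∈ restrictTotalDegree (Fin 2) K f, (∀ a ∈ A, evalAt a p = 0) → p = 0)
    {V : Submodule K (MvPolynomial (Fin 2) K)} (hVe : V ≤ restrictTotalDegree (Fin 2) K e)
    (hV : V ≠ ⊥) (hvan : ∀ p ∈ V, ∀ a ∈ S, evalAt a p = 0) :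
    #S + finrank K V + (f - e + 2).choose 2 ≤ #A + 1 := by
  have := Submodule.finiteDimensional_of_le hVe
  obtain ⟨p₀, hp₀V, hp₀⟩ := V.ne_bot_iff.1 hV
  set d := p₀.totalDegree
  have hde : d ≤ e := (mem_restrictTotalDegree _ _ _).1 (hVe hp₀V)
  set M := (restrictTotalDegree (Fin 2) K (f - d)).map (LinearMap.mulLeft K p₀)
  have hM : finrank K M = (f - d + 2).choose 2 := by
    rw [finrank_map_mulLeft hp₀, finrank_restrictTotalDegree_fin_two_s7]
  have hMV : finrank K ↥(M ⊓ V) ≤ (e - d + 2).choose 2 := by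
    calc finrank K ↥(M ⊓ V)
        ≤ finrank K ((restrictTotalDegree (Fin 2) K (e - d)).map (LinearMap.mulLeft K p₀)) := by
          refine Submodule.finrank_mono fun p hp => ?_
          obtain ⟨⟨q, -, rfl⟩, hpV⟩ := Submodule.mem_inf.1 hp
          exact Submodule.mem_map_of_mem (mem_restrictTotalDegree_of_mul_mem hp₀ (hVe hpV))
      _ = (e - d + 2).choose 2 := by
          rw [finrank_map_mulLeft hp₀, finrank_restrictTotalDegree_fin_two_s7]
  have hMVf : M ⊔ V ≤ restrictTotalDegree (Fin 2) K f := by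
    refine sup_le (Submodule.map_le_iff_le_comap.2 fun q hq => ?_)
      (hVe.trans (restrictTotalDegree_mono hef))
    have hp₀d : p₀ ∈ restrictTotalDegree (Fin 2) K d :=
      (mem_restrictTotalDegree _ _ _).2 le_rfl
    simpa [show d + (f - d) = f by omega] using mul_mem_restrictTotalDegree hp₀d hq
  have hMVvan : ∀ p ∈ M ⊔ V, ∀ a ∈ S, evalAt a p = 0 := by
    intro p hp a ha
    obtain ⟨_, ⟨q, -, rfl⟩, v, hv, rfl⟩ := Submodule.mem_sup.1 hp
    have h₀ := hvan _ hp₀V a ha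
    have hv₀ := hvan v hv a ha
    simp only [evalAt_apply, LinearMap.mulLeft_apply] at h₀ hv₀ ⊢
    rw [map_add, map_mul, h₀, hv₀, zero_mul, add_zero]
  have hcount := finrank_add_card_le_card evalAt hSA (fun p hp => hsep p (hMVf hp)) hMVvan
  have hdim := Submodule.finrank_sup_add_finrank_inf_eq M V
  have harith := Nat.choose_two_add_choose_two_le (f - e) (e - d)
  rw [show f - e + (e - d) = f - d by omega] at harith
  omega

end

section Veronese
variable {e : ℕ}

def veroExp (q : VIdx e) : Fin 2 →₀ ℕ :=
  Finsupp.single 0 (q.1.1 : ℕ) + Finsupp.single 1 (q.1.2 : ℕ)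

theorem veroExp_apply_zero (q : VIdx e) : veroExp q 0 = q.1.1 := by simp [veroExp]

theorem veroExp_apply_one (q : VIdx e) : veroExp q 1 = q.1.2 := by simp [veroExp]

theorem veroExp_injective : Function.Injective (veroExp (e := e)) := fun q q' h => by
  have h₀ := veroExp_apply_zero q ▸ veroExp_apply_zero q' ▸ DFunLike.congr_fun h 0
  have h₁ := veroExp_apply_one q ▸ veroExp_apply_one q' ▸ DFunLike.congr_fun h 1
  exact Subtype.ext (Prod.ext (Fin.ext h₀) (Fin.ext h₁))

theorem veroExp_ne_zero (q : VIdx e) : veroExp q ≠ 0 := fun h => by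
  have h₀ := veroExp_apply_zero q ▸ DFunLike.congr_fun h 0
  have h₁ := veroExp_apply_one q ▸ DFunLike.congr_fun h 1
  have := q.2.1
  simp_all

theorem monomial_veroExp (q : VIdx e) (c : ℝ) :
    monomial (veroExp q) c = C c * X 0 ^ (q.1.1 : ℕ) * X 1 ^ (q.1.2 : ℕ) := by
  rw [X_pow_eq_monomial, X_pow_eq_monomial, C_mul_monomial, monomial_mul, mul_one, mul_one,
    veroExp]

def veroPoly (x₀ : VIdx e → ℝ) : Module.Dual ℝ (VIdx e → ℝ) →ₗ[ℝ] MvPolynomial (Fin 2) ℝ :=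
  ∑ q, (LinearMap.applyₗ (Pi.single q 1)).smulRight (monomial (veroExp q) 1) -
    (LinearMap.applyₗ x₀).smulRight 1

theorem veroPoly_apply (x₀ : VIdx e → ℝ) (φ : Module.Dual ℝ (VIdx e → ℝ)) :
    veroPoly x₀ φ = ∑ q, monomial (veroExp q) (φ (Pi.single q 1)) - C (φ x₀) := by
  simp [veroPoly, smul_monomial, C_eq_smul_one]

theorem evalAt_veroPoly (x₀ : VIdx e → ℝ) (φ : Module.Dual ℝ (VIdx e → ℝ)) (a : ℝ × ℝ) :
    evalAt a (veroPoly x₀ φ) = φ (vero e a - x₀) := by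
  rw [map_sub φ, φ.apply_eq_sum_mul (vero e a)]
  simp only [evalAt_apply, veroPoly_apply, monomial_veroExp, map_sub, map_sum, map_mul, eval_C,
    eval_X, map_pow, vero, Matrix.cons_val_zero, Matrix.cons_val_one]
  congr 1
  exact sum_congr rfl fun q _ => by ring

theorem coeff_veroPoly (x₀ : VIdx e → ℝ) (φ : Module.Dual ℝ (VIdx e → ℝ)) (q : VIdx e) :
    coeff (veroExp q) (veroPoly x₀ φ) = φ (Pi.single q 1) := by
  rw [veroPoly_apply, coeff_sub, coeff_sum, coeff_C, if_neg (veroExp_ne_zero q).symm, sub_zero,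
    sum_eq_single q (fun q' _ hq' => by rw [coeff_monomial, if_neg (veroExp_injective.ne hq')])
      (by simp), coeff_monomial, if_pos rfl]

theorem veroPoly_injective (x₀ : VIdx e → ℝ) : Function.Injective (veroPoly x₀) := by
  refine (injective_iff_map_eq_zero _).2 fun φ hφ => LinearMap.ext fun x => ?_
  simp [φ.apply_eq_sum_mul x, ← coeff_veroPoly x₀ φ, hφ]

theorem veroPoly_mem_restrictTotalDegree (x₀ : VIdx e → ℝ) (φ : Module.Dual ℝ (VIdx e → ℝ)) :
    veroPoly x₀ φ ∈ restrictTotalDegree (Fin 2) ℝ e := by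
  rw [veroPoly_apply]
  refine sub_mem (sum_mem fun q _ => ?_) ?_
  · rw [mem_restrictTotalDegree]
    refine (totalDegree_monomial_le _ _).trans ?_
    simpa [Finsupp.sum_fintype, veroExp_apply_zero, veroExp_apply_one] using q.2.2
  · simp [mem_restrictTotalDegree]

def veroVanishing (F : AffineSubspace ℝ (VIdx e → ℝ)) (x₀ : VIdx e → ℝ) :
    Submodule ℝ (MvPolynomial (Fin 2) ℝ) :=
  F.direction.dualAnnihilator.map (veroPoly x₀)

theorem veroVanishing_le (F : AffineSubspace ℝ (VIdx e → ℝ)) (x₀ : VIdx e → ℝ) :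
    veroVanishing F x₀ ≤ restrictTotalDegree (Fin 2) ℝ e :=
  Submodule.map_le_iff_le_comap.2 fun φ _ => veroPoly_mem_restrictTotalDegree x₀ φ

theorem finrank_veroVanishing_add_fdim (F : AffineSubspace ℝ (VIdx e → ℝ)) (x₀ : VIdx e → ℝ) :
    finrank ℝ (veroVanishing F x₀) + fdim F = Fintype.card (VIdx e) := by
  rw [veroVanishing, ← (Submodule.equivMapOfInjective _ (veroPoly_injective x₀) _).finrank_eq,
    fdim, add_comm, Subspace.finrank_add_finrank_dualAnnihilator_eq, finrank_fintype_fun_eq_card]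

theorem evalAt_eq_zero_of_mem_veroVanishing {F : AffineSubspace ℝ (VIdx e → ℝ)}
    {x₀ : VIdx e → ℝ} (hx₀ : x₀ ∈ F) {p : MvPolynomial (Fin 2) ℝ} (hp : p ∈ veroVanishing F x₀)
    {a : ℝ × ℝ} (ha : vero e a ∈ F) : evalAt a p = 0 := by
  obtain ⟨φ, hφ, rfl⟩ := Submodule.mem_map.1 hp
  rw [evalAt_veroPoly]
  exact (Submodule.mem_dualAnnihilator φ).1 hφ _ (F.vsub_mem_direction ha hx₀)

end Veronese

theorem eq_zero_of_forall_evalAt_eq_zero {f : ℕ} {A : Finset (ℝ × ℝ)}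
    (hA : ∀ C : Set (ℝ × ℝ), IsCurveLe f C → ¬(↑A ⊆ C)) (hne : A.Nonempty)
    {p : MvPolynomial (Fin 2) ℝ} (hp : p ∈ restrictTotalDegree (Fin 2) ℝ f)
    (hvan : ∀ a ∈ A, evalAt a p = 0) : p = 0 := by
  rcases Nat.eq_zero_or_pos p.totalDegree with h0 | hpos
  · obtain ⟨a, ha⟩ := hne
    rw [totalDegree_eq_zero_iff_eq_C.1 h0] at hvan ⊢
    simpa using hvan a ha
  · exact (hA (zeroSet p) ⟨_, hpos, (mem_restrictTotalDegree _ _ _).1 hp, p, rfl, rfl⟩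
      fun a ha => hvan a ha).elim

theorem stmt_7_general (e f : ℕ) (hef : e < f)
    (F : AffineSubspace ℝ (VIdx e → ℝ)) (hF : F ≠ ⊤)
    (A : Finset (ℝ × ℝ)) (hcard : A.card = Nat.choose (f + 2) 2)
    (hA : ∀ C : Set (ℝ × ℝ), IsCurveLe f C → ¬(↑A ⊆ C)) :
    ((vero e '' ↑A ∩ ↑F).ncard : ℤ) ≤
      (Nat.choose (f + 2) 2 : ℤ) - Nat.choose (f - e + 2) 2
        - Nat.choose (e + 2) 2 + 2 + fdim F := by
  set S := A.filter (fun a => vero e a ∈ F)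
  have hS : (vero e '' ↑A ∩ ↑F).ncard ≤ #S :=
    ncard_image_inter_le_card_filter (vero e) A (F : Set (VIdx e → ℝ))
  have hN := card_vIdx_add_one e
  rcases S.eq_empty_or_nonempty with hS₀ | ⟨a₀, ha₀⟩
  · have harith := Nat.choose_two_add_choose_two_le (f - e) e
    rw [show f - e + e = f by omega] at harith
    rw [hS₀, card_empty] at hS
    omega
  have hx₀ := (mem_filter.1 ha₀).2
  have hdim := finrank_veroVanishing_add_fdim F (vero e a₀)
  have hV : veroVanishing F (vero e a₀) ≠ ⊥ := fun h => by
    have := fdim_lt_card hF ⟨_, hx₀⟩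
    rw [h, finrank_bot] at hdim
    omega
  have hne : A.Nonempty := card_pos.1 (hcard ▸ Nat.choose_pos (by omega))
  have key := card_add_finrank_add_choose_le hef.le (S := S) (filter_subset _ A)
    (fun p hp => eq_zero_of_forall_evalAt_eq_zero hA hne hp) (veroVanishing_le _ _) hV
    fun p hp a ha => evalAt_eq_zero_of_mem_veroVanishing hx₀ hp (mem_filter.1 ha).2
  omega

theorem stmt_7 (e f : ℕ) (he : 1 ≤ e) (hef : e < f)
    (F : AffineSubspace ℝ (VIdx e → ℝ)) (hF : F ≠ ⊤)
    (A : Finset (ℝ × ℝ)) (hcard : A.card = Nat.choose (f + 2) 2)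
    (hA : ∀ C : Set (ℝ × ℝ), IsCurveLe f C → ¬(↑A ⊆ C)) :
    ((vero e '' ↑A ∩ ↑F).ncard : ℤ) ≤
      (Nat.choose (f + 2) 2 : ℤ) - Nat.choose (f - e + 2) 2
        - Nat.choose (e + 2) 2 + 2 + fdim F :=
  stmt_7_general e f hef F hF A hcard hA
end
end

section
/- Let e ≥ 1, f > e, d ≥ f − e, let F be a proper affine flat in ℝ^(binom(e+2,2)−1), and let A ⊆ ℝ^2 with |A| = binom(f+2,2) such that A is not contained in any curve of degree at most f. Then the affine hull of ψ_d(A \ ψ_e^{-1}(F)) has dimension at least binom(f−e+2,2) − 1. -/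
open scoped Classical

noncomputable section

namespace Stmt8
open MvPolynomial

variable {d k : ℕ}

/-- exponent finsupp of a monomial index -/
def mexp {d : ℕ} (q : Fin (d+1) × Fin (d+1)) : Fin 2 →₀ ℕ :=
  Finsupp.single 0 (q.1 : ℕ) + Finsupp.single 1 (q.2 : ℕ)

lemma mexp_apply0 (q : Fin (d+1) × Fin (d+1)) : mexp q 0 = (q.1 : ℕ) := by
  simp [mexp, Finsupp.single_apply]

lemma mexp_apply1 (q : Fin (d+1) × Fin (d+1)) : mexp q 1 = (q.2 : ℕ) := by
  simp [mexp, Finsupp.single_apply]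

lemma mexp_inj : Function.Injective (mexp (d := d)) := by
  intro q q' h
  have h0 : mexp q 0 = mexp q' 0 := by rw [h]
  have h1 : mexp q 1 = mexp q' 1 := by rw [h]
  rw [mexp_apply0, mexp_apply0] at h0
  rw [mexp_apply1, mexp_apply1] at h1
  exact Prod.ext (Fin.ext h0) (Fin.ext h1)

lemma mexp_sum (q : Fin (d+1) × Fin (d+1)) :
    (mexp q).sum (fun _ e => e) = (q.1 : ℕ) + (q.2 : ℕ) := by
  rw [mexp, Finsupp.sum_add_index' (fun _ => rfl) (fun _ _ _ => rfl)]
  rw [Finsupp.sum_single_index rfl, Finsupp.sum_single_index rfl]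

lemma mexp_ne_zero (q : Fin (d+1) × Fin (d+1)) (h : 1 ≤ (q.1 : ℕ) + (q.2 : ℕ)) :
    mexp q ≠ 0 := by
  intro hz
  have := mexp_sum q
  rw [hz] at this
  simp [Finsupp.sum_zero_index] at this
  omega

abbrev Idx (d k : ℕ) : Type := {q : Fin (d+1) × Fin (d+1) // (q.1 : ℕ) + (q.2 : ℕ) ≤ k}

def poly (d k : ℕ) (c : Idx d k → ℝ) : MvPolynomial (Fin 2) ℝ :=
  ∑ q : Idx d k, monomial (mexp q.1) (c q)

lemma coeff_poly (c : Idx d k → ℝ) (q : Idx d k) :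
    coeff (mexp q.1) (poly d k c) = c q := by
  rw [poly, coeff_sum]
  rw [Finset.sum_eq_single q]
  · rw [coeff_monomial, if_pos rfl]
  · intro q' _ hne
    rw [coeff_monomial, if_neg]
    intro h
    exact hne (Subtype.ext (mexp_inj h))
  · intro h; exact absurd (Finset.mem_univ q) h

lemma eval_poly (c : Idx d k → ℝ) (x y : ℝ) :
    eval ![x, y] (poly d k c) = ∑ q : Idx d k, c q * x ^ (q.1.1 : ℕ) * y ^ (q.1.2 : ℕ) := by
  rw [poly, map_sum]
  refine Finset.sum_congr rfl (fun q _ => ?_)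
  rw [eval_monomial, mexp]
  rw [Finsupp.prod_add_index' (fun _ => pow_zero _) (fun _ _ _ => pow_add _ _ _)]
  simp [Finsupp.prod_single_index, mul_assoc]

lemma totalDegree_poly_le (c : Idx d k → ℝ) : (poly d k c).totalDegree ≤ k := by
  refine (totalDegree_finset_sum _ _).trans (Finset.sup_le fun q _ => ?_)
  exact (totalDegree_monomial_le _ _).trans (le_of_eq_of_le (mexp_sum q.1) q.2)

lemma one_le_totalDegree_poly {c : Idx d k → ℝ} (q : Idx d k)
    (hq : c q ≠ 0) (h1 : 1 ≤ (q.1.1 : ℕ) + (q.1.2 : ℕ)) :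
    1 ≤ (poly d k c).totalDegree := by
  have hs : mexp q.1 ∈ (poly d k c).support := by
    rw [mem_support_iff, coeff_poly]; exact hq
  have := le_totalDegree hs
  rw [mexp_sum] at this
  omega

lemma poly_ne_zero {c : Idx d k → ℝ} (q : Idx d k) (hq : c q ≠ 0) : poly d k c ≠ 0 := by
  intro h
  apply hq
  rw [← coeff_poly c q, h, coeff_zero]

def finLeEquiv (d j : ℕ) (hj : j ≤ d) : {m : Fin (d+1) // (m : ℕ) ≤ j} ≃ Fin (j+1) where
  toFun m := ⟨m.1.1, Nat.lt_succ_of_le m.2⟩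
  invFun m := ⟨⟨m.1, by omega⟩, Nat.lt_succ_iff.mp m.isLt⟩
  left_inv m := Subtype.ext (Fin.ext rfl)
  right_inv m := Fin.ext rfl

lemma sum_aux (k : ℕ) : ∑ n ∈ Finset.range (k+1), (k - n + 1) = (k+2).choose 2 := by
  have h1 : ∀ m, ∑ j ∈ Finset.range m, (j + 1) = (m+1).choose 2 := by
    intro m
    induction m with
    | zero => simp
    | succ m ih =>
      rw [Finset.sum_range_succ, ih, Nat.choose_succ_succ (m+1) 1]
      simp [Nat.choose_one_right, Nat.add_comm]
  have h2 := Finset.sum_range_reflect (fun j => j + 1) (k+1)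
  have h3 : ∀ n ∈ Finset.range (k+1), (k + 1 - 1 - n + 1) = (k - n + 1) := by
    intro n hn; rw [Finset.mem_range] at hn; omega
  rw [← Finset.sum_congr rfl h3, h2, h1]

lemma card_Idx (d k : ℕ) (hk : k ≤ d) : Fintype.card (Idx d k) = (k+2).choose 2 := by
  have e1 : Idx d k ≃ Σ n : Fin (d+1), {m : Fin (d+1) // (n : ℕ) + (m : ℕ) ≤ k} :=
    Equiv.subtypeProdEquivSigmaSubtype (fun (a b : Fin (d+1)) => (a : ℕ) + (b : ℕ) ≤ k)
  rw [Fintype.card_congr e1, Fintype.card_sigma]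
  have hcard : ∀ n : Fin (d+1),
      Fintype.card {m : Fin (d+1) // (n : ℕ) + (m : ℕ) ≤ k}
        = if (n : ℕ) ≤ k then k - (n : ℕ) + 1 else 0 := by
    intro n
    by_cases hn : (n : ℕ) ≤ k
    · rw [if_pos hn]
      have e2 : {m : Fin (d+1) // (n : ℕ) + (m : ℕ) ≤ k}
          ≃ {m : Fin (d+1) // (m : ℕ) ≤ k - (n : ℕ)} :=
        Equiv.subtypeEquivRight (fun m => by omega)
      rw [Fintype.card_congr e2, Fintype.card_congr (finLeEquiv d (k - n) (by omega)),
        Fintype.card_fin]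
    · rw [if_neg hn]
      rw [Fintype.card_eq_zero_iff]
      exact ⟨fun m => absurd m.2 (by omega)⟩
  rw [Finset.sum_congr rfl (fun n _ => hcard n)]
  rw [Fin.sum_univ_eq_sum_range (fun n => if n ≤ k then k - n + 1 else 0) (d+1)]
  have h4 : (∑ n ∈ Finset.range (d+1), if n ≤ k then k - n + 1 else 0)
      = ∑ n ∈ Finset.range (k+1), (if n ≤ k then k - n + 1 else 0) :=
    (Finset.sum_subset (Finset.range_subset_range.2 (by omega)) (fun n _ hn => by
      rw [Finset.mem_range] at hn; rw [if_neg (by omega)])).symm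
  have h5 : ∀ n ∈ Finset.range (k+1), (if n ≤ k then k - n + 1 else 0) = k - n + 1 :=
    fun n hn => if_pos (Nat.lt_succ_iff.mp (Finset.mem_range.mp hn))
  rw [h4, Finset.sum_congr rfl h5]
  exact sum_aux k

lemma eval_monomial_mexp (A : ℝ) (q : Fin (d+1) × Fin (d+1)) (x y : ℝ) :
    eval ![x, y] (monomial (mexp q) A) = A * x ^ (q.1 : ℕ) * y ^ (q.2 : ℕ) := by
  rw [eval_monomial, mexp]
  rw [Finsupp.prod_add_index' (fun _ => pow_zero _) (fun _ _ _ => pow_add _ _ _)]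
  simp [Finsupp.prod_single_index, mul_assoc]

def phi (d k : ℕ) (hkd : k ≤ d) : Idx d k → Module.Dual ℝ (VIdx d → ℝ) := fun q =>
  if h : 1 ≤ (q.1.1 : ℕ) + (q.1.2 : ℕ) then
    LinearMap.proj (⟨q.1, h, le_trans q.2 hkd⟩ : VIdx d) else 0

def q0 (d k : ℕ) : Idx d k := ⟨(0, 0), by simp⟩

lemma eq_q0 {q : Idx d k} (h : ¬ 1 ≤ (q.1.1 : ℕ) + (q.1.2 : ℕ)) : q = q0 d k := by
  have h1 : (q.1.1 : ℕ) = 0 ∧ (q.1.2 : ℕ) = 0 := by omega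
  exact Subtype.ext (Prod.ext (Fin.ext (by simp [q0, h1.1])) (Fin.ext (by simp [q0, h1.2])))

lemma eval_poly_eq (hkd : k ≤ d) (c : Idx d k → ℝ) (b : ℝ × ℝ) :
    MvPolynomial.eval ![b.1, b.2] (poly d k c)
      = (∑ q : Idx d k, c q * phi d k hkd q (vero d b)) + c (q0 d k) := by
  rw [eval_poly]
  have hterm : ∀ q : Idx d k,
      c q * b.1 ^ (q.1.1 : ℕ) * b.2 ^ (q.1.2 : ℕ)
        = c q * phi d k hkd q (vero d b) + (if q = q0 d k then c q else 0) := by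
    intro q
    by_cases h : 1 ≤ (q.1.1 : ℕ) + (q.1.2 : ℕ)
    · rw [phi, dif_pos h, if_neg, add_zero]
      · rw [LinearMap.proj_apply]
        show c q * b.1 ^ (q.1.1 : ℕ) * b.2 ^ (q.1.2 : ℕ)
          = c q * (b.1 ^ (q.1.1 : ℕ) * b.2 ^ (q.1.2 : ℕ))
        ring
      · intro hq
        rw [hq] at h
        simp [q0] at h
    · have h1 : (q.1.1 : ℕ) = 0 ∧ (q.1.2 : ℕ) = 0 := by omega
      rw [phi, dif_neg h, if_pos (eq_q0 h), LinearMap.zero_apply, mul_zero, zero_add,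
        h1.1, h1.2, pow_zero, pow_zero, mul_one, mul_one]
  rw [Finset.sum_congr rfl (fun q _ => hterm q), Finset.sum_add_distrib,
    Finset.sum_ite_eq' Finset.univ (q0 d k)]
  simp

lemma exists_vanishing (d k : ℕ) (hkd : k ≤ d) (B : Set (ℝ × ℝ)) (b₀ : ℝ × ℝ) (hb₀ : b₀ ∈ B)
    (hdim : adim (vero d '' B) + 1 < (k+2).choose 2) :
    ∃ h : MvPolynomial (Fin 2) ℝ, 1 ≤ h.totalDegree ∧ h.totalDegree ≤ k ∧
      ∀ b ∈ B, MvPolynomial.eval ![b.1, b.2] h = 0 := by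
  classical
  set W := (affineSpan ℝ (vero d '' B)).direction with hW
  set M : (Idx d k → ℝ) →ₗ[ℝ] Module.Dual ℝ (VIdx d → ℝ) :=
    ∑ q : Idx d k, (LinearMap.proj q).smulRight (phi d k hkd q) with hMdef
  have hM : ∀ (c : Idx d k → ℝ) v, M c v = ∑ q : Idx d k, c q * phi d k hkd q v := by
    intro c v
    rw [hMdef, LinearMap.sum_apply, LinearMap.sum_apply]
    refine Finset.sum_congr rfl fun q _ => ?_
    rw [LinearMap.smulRight_apply, LinearMap.proj_apply, LinearMap.smul_apply, smul_eq_mul]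
  set E : (Idx d k → ℝ) →ₗ[ℝ] ℝ :=
    ∑ q : Idx d k, (b₀.1 ^ (q.1.1 : ℕ) * b₀.2 ^ (q.1.2 : ℕ)) • LinearMap.proj q with hEdef
  have hE : ∀ c : Idx d k → ℝ, E c = MvPolynomial.eval ![b₀.1, b₀.2] (poly d k c) := by
    intro c
    rw [eval_poly, hEdef, LinearMap.sum_apply]
    refine Finset.sum_congr rfl fun q _ => ?_
    rw [LinearMap.smul_apply, LinearMap.proj_apply, smul_eq_mul]
    ring
  set L : (Idx d k → ℝ) →ₗ[ℝ] ℝ × Module.Dual ℝ W := E.prod (W.subtype.dualMap.comp M)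
    with hLdef
  have hfr : Module.finrank ℝ (ℝ × Module.Dual ℝ W) < Module.finrank ℝ (Idx d k → ℝ) := by
    rw [Module.finrank_prod, Module.finrank_self, Subspace.dual_finrank_eq,
      Module.finrank_fintype_fun_eq_card, card_Idx d k hkd]
    have : Module.finrank ℝ W = adim (vero d '' B) := rfl
    omega
  obtain ⟨c, hcne, hc⟩ : ∃ c : Idx d k → ℝ, c ≠ 0 ∧ L c = 0 := by
    by_contra hcon
    push_neg at hcon
    have hinj : Function.Injective L := by
      rw [← LinearMap.ker_eq_bot, Submodule.eq_bot_iff]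
      intro c hcmem
      by_contra h0
      exact hcon c h0 (LinearMap.mem_ker.mp hcmem)
    exact absurd (LinearMap.finrank_le_finrank_of_injective hinj) (by omega)
  have hc1 : E c = 0 := by
    have := congrArg Prod.fst hc
    simpa [hLdef] using this
  have hc2 : W.subtype.dualMap (M c) = 0 := by
    have := congrArg Prod.snd hc
    simpa [hLdef] using this
  have heval0 : MvPolynomial.eval ![b₀.1, b₀.2] (poly d k c) = 0 := by rw [← hE, hc1]
  have hvanishW : ∀ w ∈ W, M c w = 0 := by
    intro w hw
    have h3 : W.subtype.dualMap (M c) ⟨w, hw⟩ = 0 := by rw [hc2]; rfl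
    rwa [LinearMap.dualMap_apply, Submodule.coe_subtype] at h3
  have hvanish : ∀ b ∈ B, MvPolynomial.eval ![b.1, b.2] (poly d k c) = 0 := by
    intro b hb
    have hmem1 : vero d b ∈ affineSpan ℝ (vero d '' B) :=
      subset_affineSpan ℝ _ ⟨b, hb, rfl⟩
    have hmem0 : vero d b₀ ∈ affineSpan ℝ (vero d '' B) :=
      subset_affineSpan ℝ _ ⟨b₀, hb₀, rfl⟩
    have hdiff : vero d b - vero d b₀ ∈ W := by
      have := AffineSubspace.vsub_mem_direction hmem1 hmem0
      simpa [vsub_eq_sub] using this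
    have h4 := hvanishW _ hdiff
    rw [map_sub, sub_eq_zero] at h4
    rw [eval_poly_eq hkd, ← hM, h4, hM, ← eval_poly_eq hkd]
    exact heval0
  obtain ⟨q, hq1, hqc⟩ : ∃ q : Idx d k, 1 ≤ (q.1.1 : ℕ) + (q.1.2 : ℕ) ∧ c q ≠ 0 := by
    by_contra hno
    push_neg at hno
    have hMzero : M c (vero d b₀) = 0 := by
      rw [hM]
      refine Finset.sum_eq_zero fun q _ => ?_
      by_cases h : 1 ≤ (q.1.1 : ℕ) + (q.1.2 : ℕ)
      · rw [hno q h, zero_mul]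
      · rw [phi, dif_neg h, LinearMap.zero_apply, mul_zero]
    have hq0z : c (q0 d k) = 0 := by
      have h5 := heval0
      rw [eval_poly_eq hkd, ← hM, hMzero, zero_add] at h5
      exact h5
    apply hcne
    funext q
    by_cases h : 1 ≤ (q.1.1 : ℕ) + (q.1.2 : ℕ)
    · exact hno q h
    · rw [eq_q0 h]; exact hq0z
  exact ⟨poly d k c, one_le_totalDegree_poly q hqc hq1, totalDegree_poly_le c, hvanish⟩

lemma exists_g (e : ℕ) (he : 1 ≤ e) (F : AffineSubspace ℝ (VIdx e → ℝ)) (hF : F ≠ ⊤) :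
    ∃ g : MvPolynomial (Fin 2) ℝ, 1 ≤ g.totalDegree ∧ g.totalDegree ≤ e ∧
      ∀ a : ℝ × ℝ, vero e a ∈ F → MvPolynomial.eval ![a.1, a.2] g = 0 := by
  classical
  by_cases hne : (F : Set (VIdx e → ℝ)).Nonempty
  · obtain ⟨x₀, hx₀⟩ := hne
    have hdir : F.direction < ⊤ := by
      rw [lt_top_iff_ne_top]
      intro h
      exact hF ((AffineSubspace.direction_eq_top_iff_of_nonempty ⟨x₀, hx₀⟩).mp h)
    obtain ⟨φ, hφne, hφmap⟩ := Submodule.exists_dual_map_eq_bot_of_lt_top hdir inferInstance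
    have hker : ∀ v ∈ F.direction, φ v = 0 := by
      intro v hv
      have h1 : φ v ∈ F.direction.map φ := Submodule.mem_map_of_mem hv
      rw [hφmap] at h1
      simpa using h1
    set g : MvPolynomial (Fin 2) ℝ :=
      (∑ r : VIdx e, monomial (mexp r.1) (φ (fun j => if r = j then 1 else 0)))
        + C (- φ x₀) with hg
    have hevalg : ∀ a : ℝ × ℝ, eval ![a.1, a.2] g = φ (vero e a) - φ x₀ := by
      intro a
      rw [hg, map_add, map_sum, eval_C]
      have hterm : ∀ r : VIdx e,
          eval ![a.1, a.2] (monomial (mexp r.1) (φ (fun j => if r = j then 1 else 0)))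
            = vero e a r • φ (fun j => if r = j then 1 else 0) := by
        intro r
        rw [eval_monomial_mexp, smul_eq_mul, vero]
        ring
      rw [Finset.sum_congr rfl (fun r _ => hterm r),
        ← LinearMap.pi_apply_eq_sum_univ φ (vero e a)]
      ring
    have hvan : ∀ a : ℝ × ℝ, vero e a ∈ F → eval ![a.1, a.2] g = 0 := by
      intro a ha
      rw [hevalg]
      have h2 : vero e a - x₀ ∈ F.direction := by
        have := AffineSubspace.vsub_mem_direction ha hx₀
        simpa [vsub_eq_sub] using this
      have h0 := hker _ h2
      rw [map_sub, sub_eq_zero] at h0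
      rw [h0, sub_self]
    obtain ⟨r₀, hr₀⟩ : ∃ r : VIdx e, φ (fun j => if r = j then 1 else 0) ≠ 0 := by
      by_contra hall
      push_neg at hall
      apply hφne
      refine LinearMap.ext fun v => ?_
      rw [LinearMap.pi_apply_eq_sum_univ φ v, LinearMap.zero_apply]
      exact Finset.sum_eq_zero fun r _ => by rw [hall r, smul_zero]
    have hcoeff : coeff (mexp r₀.1) g = φ (fun j => if r₀ = j then 1 else 0) := by
      rw [hg, coeff_add, coeff_C, if_neg (fun hz => mexp_ne_zero r₀.1 r₀.2.1 hz.symm), add_zero,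
        coeff_sum]
      rw [Finset.sum_eq_single r₀]
      · rw [coeff_monomial, if_pos rfl]
      · intro r _ hne'
        rw [coeff_monomial, if_neg]
        intro hm
        exact hne' (Subtype.ext (mexp_inj hm))
      · intro h'; exact absurd (Finset.mem_univ r₀) h'
    have hdeg1 : 1 ≤ g.totalDegree := by
      have hs : mexp r₀.1 ∈ g.support := mem_support_iff.mpr (by rw [hcoeff]; exact hr₀)
      have h3 := le_totalDegree hs
      have h4 := mexp_sum r₀.1
      have h5 : ((mexp r₀.1).sum fun _ e => e) = (r₀.1.1 : ℕ) + (r₀.1.2 : ℕ) := h4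
      have h6 := r₀.2.1
      omega
    have hdegle : g.totalDegree ≤ e := by
      rw [hg]
      refine (totalDegree_add _ _).trans (max_le ?_ ?_)
      · exact (totalDegree_finset_sum _ _).trans (Finset.sup_le fun r _ =>
          (totalDegree_monomial_le _ _).trans (le_of_eq_of_le (mexp_sum r.1) r.2.2))
      · exact le_of_eq_of_le (totalDegree_C _) (Nat.zero_le e)
    exact ⟨g, hdeg1, hdegle, hvan⟩
  · refine ⟨X 0, ?_, ?_, ?_⟩
    · rw [totalDegree_X]
    · rw [totalDegree_X]; exact he
    · intro a ha
      exact absurd ⟨vero e a, ha⟩ hne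

end Stmt8

open Stmt8 MvPolynomial in
theorem stmt_8 (e f d : ℕ) (he : 1 ≤ e) (hef : e < f) (hd : f - e ≤ d)
    (F : AffineSubspace ℝ (VIdx e → ℝ)) (hF : F ≠ ⊤)
    (A : Finset (ℝ × ℝ)) (hcard : A.card = Nat.choose (f + 2) 2)
    (hA : ∀ C : Set (ℝ × ℝ), IsCurveLe f C → ¬(↑A ⊆ C)) :
    Nat.choose (f - e + 2) 2 - 1 ≤ adim (vero d '' (↑A \ vero e ⁻¹' ↑F)) := by
  classical
  set B : Set (ℝ × ℝ) := ↑A \ vero e ⁻¹' ↑F with hB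
  by_contra hcon
  push_neg at hcon
  obtain ⟨g, hg1, hge, hgvan⟩ := exists_g e he F hF
  by_cases hBne : B.Nonempty
  · obtain ⟨b₀, hb₀⟩ := hBne
    have hdim : adim (vero d '' B) + 1 < (f - e + 2).choose 2 := by omega
    obtain ⟨h, hh1, hhk, hhvan⟩ := exists_vanishing d (f - e) hd B b₀ hb₀ hdim
    set p := g * h with hp
    have hgne : g ≠ 0 := fun hz => by rw [hz, totalDegree_zero] at hg1; omega
    have hhne : h ≠ 0 := fun hz => by rw [hz, totalDegree_zero] at hh1; omega
    have hpne : p ≠ 0 := mul_ne_zero hgne hhne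
    have hpeval0 : eval ![b₀.1, b₀.2] p = 0 := by
      rw [hp, map_mul, hhvan b₀ hb₀, mul_zero]
    have hdegle : p.totalDegree ≤ f := (totalDegree_mul g h).trans (by omega)
    have hdeg1 : 1 ≤ p.totalDegree := by
      by_contra hlt
      have h0 : p.totalDegree = 0 := by omega
      have hconst : ∀ v : Fin 2 → ℝ, eval v p = ∑ m ∈ p.support, coeff m p := by
        intro v
        rw [eval_eq]
        refine Finset.sum_congr rfl fun m hm => ?_
        have hm0 : ∀ x, m x = 0 := (totalDegree_eq_zero_iff _ p).mp h0 m hm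
        have : ∀ i ∈ m.support, v i ^ m i = 1 := fun i _ => by rw [hm0 i, pow_zero]
        rw [Finset.prod_congr rfl this, Finset.prod_const_one, mul_one]
      apply hpne
      apply MvPolynomial.funext (q := 0)
      intro v
      rw [hconst v, ← hconst ![b₀.1, b₀.2], hpeval0, map_zero]
    refine hA (zeroSet p) ⟨p.totalDegree, hdeg1, hdegle, p, rfl, rfl⟩ ?_
    intro a ha
    show eval ![a.1, a.2] p = 0
    by_cases hmem : a ∈ vero e ⁻¹' ↑F
    · rw [hp, map_mul, hgvan a hmem, zero_mul]
    · rw [hp, map_mul, hhvan a ⟨ha, hmem⟩, mul_zero]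
  · refine hA (zeroSet g) ⟨g.totalDegree, hg1, hge.trans (by omega), g, rfl, rfl⟩ ?_
    intro a ha
    have hmem : a ∈ vero e ⁻¹' ↑F := by
      by_contra hmem
      exact hBne ⟨a, ha, hmem⟩
    exact hgvan a hmem
end
end

section
/- Let e ≥ 0 and let A be a finite subset of ℝ^2 not contained in any curve of degree at most e. Let R be the family of subsets B of A with |B| = binom(e+2,2) such that B is not contained in any curve of degree at most e. Then |R| ≥ |A| / 2^(binom(e+2,2)−1). -/
open scoped Classical

noncomputable section

/-!
Polynomials of degree at most `e` in two variables form a space `V` of dimension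
`N = (e + 2).choose 2`. A nonzero constant vanishes nowhere, so a nonempty set `B` lies on a curve
of degree at most `e` exactly when some nonzero `p ∈ V` vanishes on `B`, i.e. exactly when the
evaluation functionals at the points of `B` fail to span the dual of `V`. If they span for `A`,
then each point of `A` extends to a basis of the dual taken from `A`: an `N`-point subset of `A`
on no such curve. These subsets cover `A`, so `|A| ≤ N |R| ≤ 2 ^ (N - 1) |R|`.
-/

open Module Submodule MvPolynomial

theorem Finset.card_le_card_mul_of_forall_exists_mem {α : Type*} {s : Finset α}
    {R : Finset (Finset α)} {n : ℕ} (hR : ∀ t ∈ R, t.card ≤ n) (hs : ∀ a ∈ s, ∃ t ∈ R, a ∈ t) :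
    s.card ≤ R.card * n :=
  calc s.card ≤ (R.biUnion id).card := card_le_card fun a ha => by simpa using hs a ha
    _ ≤ R.card * n := card_biUnion_le_card_mul R id n hR

theorem Nat.card_pairs_add_le (m : ℕ) :
    Nat.card {p : ℕ × ℕ // p.1 + p.2 ≤ m} = (m + 2).choose 2 := by
  open Finset HasAntidiagonal in
  have hS : ∀ p : ℕ × ℕ, p ∈ (range (m + 1)).biUnion antidiagonal ↔ p.1 + p.2 ≤ m := by simp
  rw [Nat.card_congr (Equiv.subtypeEquivRight hS).symm, Nat.card_eq_fintype_card,
    Fintype.card_coe, card_biUnion]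
  · simp only [Finset.Nat.card_antidiagonal]
    rw [Nat.choose_two_right, ← Finset.sum_range_id, Finset.sum_range_succ' _ (m + 1)]
    simp
  · intro i _ j _ hij
    exact disjoint_left.mpr fun p hi hj =>
      hij ((mem_antidiagonal.mp hi).symm.trans (mem_antidiagonal.mp hj))

theorem Module.Dual.span_eq_top_iff {K V : Type*} [Field K] [AddCommGroup V] [Module K V]
    [FiniteDimensional K V] (s : Set (Dual K V)) :
    span K s = ⊤ ↔ ∀ v : V, (∀ f ∈ s, f v = 0) → v = 0 := by
  rw [← Subspace.dualCoannihilator_dualAnnihilator_eq (W := span K s), ← dualAnnihilator_bot,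
    Subspace.dualAnnihilator_inj, eq_bot_iff, ← SetLike.coe_subset_coe, coe_dualCoannihilator_span]
  simp [Set.subset_def]

theorem exists_mem_finset_card_eq_finrank_of_span_eq_top {ι K V : Type*} [Field K]
    [AddCommGroup V] [Module K V] [FiniteDimensional K V] {v : ι → V} {s : Finset ι}
    (hs : span K (v '' s) = ⊤) {i : ι} (hi : i ∈ s) (hvi : v i ≠ 0) :
    ∃ t ⊆ s, i ∈ t ∧ t.card = finrank K V ∧ span K (v '' t) = ⊤ := by
  obtain ⟨b, hbs, hib, hspan, hli⟩ := exists_linearIndepOn_extension (.singleton (R := K) hvi)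
    (Set.singleton_subset_iff.mpr (Finset.mem_coe.mpr hi))
  lift b to Finset ι using s.finite_toSet.subset hbs
  have hspan_b : span K (v '' b) = ⊤ := eq_top_iff.mpr (hs ▸ span_le.mpr hspan)
  refine ⟨b, by simpa using hbs, by simpa using hib, ?_, hspan_b⟩
  have := finrank_span_finset_eq_card (R := K) (s := b.image v) (by simpa using hli.id_image)
  rw [Finset.coe_image, hspan_b, finrank_top, Finset.card_image_of_injOn hli.injOn] at this
  exact this.symm

namespace MvPolynomial

variable {σ K : Type*} [Field K]

theorem finrank_restrictTotalDegree_fin_two (m : ℕ) :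
    finrank K (restrictTotalDegree (Fin 2) K m) = (m + 2).choose 2 := by
  rw [restrictTotalDegree, finrank_eq_nat_card_basis (basisRestrictSupport K _),
    ← Nat.card_pairs_add_le]
  exact Nat.card_congr <| (Finsupp.equivFunOnFinite.trans (finTwoArrowEquiv ℕ)).subtypeEquiv
    fun n => by simp [Finsupp.sum_fintype, Fin.sum_univ_two]

def evalDegreeLE (m : ℕ) (x : σ → K) : Dual K (restrictTotalDegree σ K m) :=
  (aeval x).toLinearMap ∘ₗ (restrictTotalDegree σ K m).subtype

@[simp]
theorem evalDegreeLE_apply (m : ℕ) (x : σ → K) (p : restrictTotalDegree σ K m) :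
    evalDegreeLE m x p = eval x (p : MvPolynomial σ K) := by
  simp [evalDegreeLE]

theorem evalDegreeLE_ne_zero (m : ℕ) (x : σ → K) : evalDegreeLE m x ≠ 0 := by
  intro h
  have := LinearMap.congr_fun h ⟨1, (mem_restrictTotalDegree _ _ _).mpr (by simp)⟩
  simp at this

theorem span_evalDegreeLE_eq_top_iff [Finite σ] (m : ℕ) (S : Set (σ → K)) :
    span K (evalDegreeLE m '' S) = ⊤ ↔
      ∀ p : MvPolynomial σ K, p.totalDegree ≤ m → (∀ x ∈ S, eval x p = 0) → p = 0 := by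
  rw [Module.Dual.span_eq_top_iff]
  simp [mem_restrictTotalDegree]

end MvPolynomial

theorem forall_isCurveLe_not_subset_iff_span_eq_top (e : ℕ) {B : Set (ℝ × ℝ)} (hB : B.Nonempty) :
    (∀ C, IsCurveLe e C → ¬ B ⊆ C) ↔
      span ℝ ((fun b : ℝ × ℝ => evalDegreeLE e ![b.1, b.2]) '' B) = ⊤ := by
  rw [← Set.image_image (evalDegreeLE e), span_evalDegreeLE_eq_top_iff]
  constructor
  · intro h p hp hpB
    by_contra hp0
    obtain ⟨b, hb⟩ := hB
    have hdeg : 1 ≤ p.totalDegree := by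
      by_contra! h0
      have hC := totalDegree_eq_zero_iff_eq_C.mp (Nat.lt_one_iff.mp h0)
      have hb0 := hpB _ ⟨b, hb, rfl⟩
      rw [hC, eval_C] at hb0
      exact hp0 (by rw [hC, hb0, C_0])
    exact h (zeroSet p) ⟨_, hdeg, hp, p, rfl, rfl⟩ fun b hb => hpB _ ⟨b, hb, rfl⟩
  · rintro h C ⟨k, hk, hke, p, rfl, rfl⟩ hBC
    have hp0 := h p hke (by rintro _ ⟨b, hb, rfl⟩; exact hBC hb)
    subst hp0
    simp at hk

theorem stmt_9 (e : ℕ) (A : Finset (ℝ × ℝ))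
    (hA : ∀ C : Set (ℝ × ℝ), IsCurveLe e C → ¬(↑A ⊆ C)) :
    (A.card : ℝ) / 2 ^ (Nat.choose (e + 2) 2 - 1) ≤
      (((A.powersetCard (Nat.choose (e + 2) 2)).filter
        (fun B => ∀ C : Set (ℝ × ℝ), IsCurveLe e C → ¬(↑B ⊆ C))).card : ℝ) := by
  set N := (e + 2).choose 2
  set R := (A.powersetCard N).filter (fun B => ∀ C : Set (ℝ × ℝ), IsCurveLe e C → ¬(↑B ⊆ C))
  rcases A.eq_empty_or_nonempty with rfl | hA_ne
  · simp
  have hspan := (forall_isCurveLe_not_subset_iff_span_eq_top e (Finset.coe_nonempty.mpr hA_ne)).mp hA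
  have hcover : ∀ a ∈ A, ∃ B ∈ R, a ∈ B := by
    intro a ha
    obtain ⟨B, hBA, haB, hcard, hBspan⟩ :=
      exists_mem_finset_card_eq_finrank_of_span_eq_top hspan ha (evalDegreeLE_ne_zero _ _)
    rw [Subspace.dual_finrank_eq, finrank_restrictTotalDegree_fin_two] at hcard
    exact ⟨B, Finset.mem_filter.mpr ⟨Finset.mem_powersetCard.mpr ⟨hBA, hcard⟩,
      (forall_isCurveLe_not_subset_iff_span_eq_top e ⟨a, haB⟩).mpr hBspan⟩, haB⟩
  have hcount : A.card ≤ R.card * N := Finset.card_le_card_mul_of_forall_exists_mem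
    (fun B hB => (Finset.mem_powersetCard.mp (Finset.mem_filter.mp hB).1).2.le) hcover
  have hN : N ≤ 2 ^ (N - 1) := by
    have := (N - 1).lt_two_pow_self
    omega
  rw [div_le_iff₀ (by positivity)]
  exact_mod_cast hcount.trans (Nat.mul_le_mul_left _ hN)
end
end

section
/- Let d ≥ 2, let L be a line in ℝ^2, let B₀ ⊆ ℝ^2 \ L with |B₀| = binom(d+1,2) such that B₀ is not contained in any curve of degree at most d−1, and let B₁ ⊆ L with |B₁| > d. Then A := B₀ ∪ B₁ is not contained in any curve of degree at most d. -/
/-! If the curve `p = 0`, with `1 ≤ deg p ≤ d`, contained `B₀ ∪ B₁`, then `p` would vanish at more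
than `deg p` points of the line `L = {l = 0}`. Along a parametrisation of `L`, `p` is a univariate
polynomial of degree at most `deg p`, so it vanishes on all of `L`; substituting for one variable
the value it takes on `L` then shows `l ∣ p`. The cofactor `q` has degree `deg p - 1 ≤ d - 1`, it
vanishes on `B₀` because `l` vanishes nowhere on `B₀`, and, being nonzero with a zero, it is not
constant. So `q = 0` is a curve of degree at most `d - 1` through `B₀`. -/

open scoped Classical

noncomputable section

open MvPolynomial

section

variable {σ R : Type*}

theorem one_le_totalDegree_of_eval_eq_zero [CommSemiring R] {p : MvPolynomial σ R}
    (hp : p ≠ 0) {v : σ → R} (hv : eval v p = 0) : 1 ≤ p.totalDegree := by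
  refine Nat.one_le_iff_ne_zero.mpr fun h => hp ?_
  rw [totalDegree_eq_zero_iff_eq_C.mp h, eval_C] at hv
  rw [totalDegree_eq_zero_iff_eq_C.mp h, hv, C_0]

theorem eval_bind₁_update [CommSemiring R] [DecidableEq σ] (v : σ → R) (i : σ) (g p : MvPolynomial σ R) :
    eval v (bind₁ (Function.update X i g) p) = eval (Function.update v i (eval v g)) p := by
  refine (eval₂Hom_bind₁ _ _ _ _).trans (congrArg (fun w => eval w p) (funext fun k => ?_))
  rcases eq_or_ne k i with rfl | hk <;> simp [*]

theorem X_sub_dvd_sub_bind₁_update [CommRing R] [DecidableEq σ] (i : σ)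
    (g p : MvPolynomial σ R) :
    X i - g ∣ p - bind₁ (Function.update X i g) p := by
  rw [← Ideal.mem_span_singleton, ← Ideal.Quotient.eq]
  suffices h : (Ideal.Quotient.mkₐ R (Ideal.span {X i - g})).comp (bind₁ (Function.update X i g))
      = Ideal.Quotient.mkₐ R _ from (AlgHom.congr_fun h p).symm
  refine algHom_ext fun j => ?_
  rcases eq_or_ne j i with rfl | hj
  · simpa [Ideal.Quotient.eq, Ideal.mem_span_singleton] using dvd_sub_comm.mp dvd_rfl
  · simp [hj]

variable [CommRing R] [IsDomain R]

theorem eval_add_smul_eq_zero_of_card_lt {p : MvPolynomial σ R} {P D : σ → R} {T : Finset R}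
    (hT : p.totalDegree < T.card) (hp : ∀ t ∈ T, eval (P + t • D) p = 0) (t : R) :
    eval (P + t • D) p = 0 := by
  set Q : Polynomial R := aeval (fun i => Polynomial.C (D i) * Polynomial.X + Polynomial.C (P i)) p
  have hQ : ∀ t, Q.eval t = eval (P + t • D) p := fun t => by
    rw [← Polynomial.coe_aeval_eq_eval, comp_aeval_apply, ← aeval_eq_eval]
    congr 2; funext i; simp; ring
  have hdeg : Q.natDegree ≤ p.totalDegree := by
    simpa using aeval_natDegree_le p le_rfl _ fun i => Polynomial.natDegree_linear_le
  have hQ0 : Q = 0 := Polynomial.eq_zero_of_natDegree_lt_card_of_eval_eq_zero' Q T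
    (fun t ht => (hQ t).trans (hp t ht)) (hdeg.trans_lt hT)
  rw [← hQ, hQ0, Polynomial.eval_zero]

theorem X_sub_dvd_of_eval_eq_zero [Infinite R] {i : σ} {g p : MvPolynomial σ R}
    (hg : i ∉ g.vars) (hp : ∀ v, v i = eval v g → eval v p = 0) : X i - g ∣ p := by
  have h0 : bind₁ (Function.update X i g) p = 0 := MvPolynomial.funext fun v => by
    have hw : eval (Function.update v i (eval v g)) g = eval v g :=
      hom_congr_vars (by ext; simp)
        (fun k hk _ => by simp [Function.update_of_ne (ne_of_mem_of_not_mem hk hg)]) rfl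
    rw [eval_bind₁_update, map_zero]
    exact hp _ (by simp [hw])
  simpa [h0] using X_sub_dvd_sub_bind₁_update i g p

end

theorem eq_linear_of_totalDegree_le_one {R : Type*} [CommSemiring R] {l : MvPolynomial (Fin 2) R}
    (h : l.totalDegree ≤ 1) :
    l = C (coeff (Finsupp.single 0 1) l) * X 0 + C (coeff (Finsupp.single 1 1) l) * X 1
      + C (coeff 0 l) := by
  ext m
  have hsplit : m = Finsupp.single 0 (m 0) + Finsupp.single 1 (m 1) := by
    ext i; fin_cases i <;> simp
  have hext : ∀ n : Fin 2 →₀ ℕ, n = m ↔ n 0 = m 0 ∧ n 1 = m 1 := fun n => by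
    simp [Finsupp.ext_iff, Fin.forall_fin_two]
  simp only [coeff_add, coeff_C_mul, coeff_X, coeff_C, hext, Finsupp.single_apply,
    Finsupp.coe_zero, Pi.zero_apply]
  by_cases hdeg : 2 ≤ m 0 + m 1
  · rw [coeff_eq_zero_of_totalDegree_lt]
    · split_ifs <;> first | omega | simp
    · rw [(Finset.sum_subset (Finset.subset_univ _) (by simp)).trans (Fin.sum_univ_two _)]
      omega
  · obtain ⟨h0, h1⟩ | ⟨h0, h1⟩ | ⟨h0, h1⟩ :
        (m 0 = 0 ∧ m 1 = 0) ∨ (m 0 = 1 ∧ m 1 = 0) ∨ (m 0 = 0 ∧ m 1 = 1) := by omega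
    all_goals rw [hsplit, h0, h1]; simp

theorem exists_eq_linear_of_totalDegree_eq_one {R : Type*} [CommSemiring R] [Nontrivial R]
    {l : MvPolynomial (Fin 2) R} (h : l.totalDegree = 1) :
    ∃ a b c : R, (a, b) ≠ 0 ∧ l = C a * X 0 + C b * X 1 + C c := by
  refine ⟨_, _, _, fun hab => ?_, eq_linear_of_totalDegree_le_one h.le⟩
  obtain ⟨ha, hb⟩ := Prod.mk_eq_zero.mp hab
  have hl := eq_linear_of_totalDegree_le_one h.le
  rw [ha, hb, C_0, zero_mul, zero_mul, zero_add, zero_add] at hl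
  rw [hl, totalDegree_C] at h
  exact zero_ne_one h

section

variable {σ K : Type*} [Field K] [Infinite K]

theorem C_mul_X_add_dvd_of_eval_eq_zero {b : K} (hb : b ≠ 0) {j : σ}
    {g p : MvPolynomial σ K} (hg : j ∉ g.vars)
    (hp : ∀ v, eval v (C b * X j + g) = 0 → eval v p = 0) :
    C b * X j + g ∣ p := by
  have hl : C b * X j + g = C b * (X j - -(C b⁻¹ * g)) := by
    rw [sub_neg_eq_add, mul_add, ← mul_assoc, ← C_mul, mul_inv_cancel₀ hb, C_1, one_mul]
  rw [hl, (hb.isUnit.map C).mul_left_dvd]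
  refine X_sub_dvd_of_eval_eq_zero (by rwa [vars_neg, vars_C_mul _ (inv_ne_zero hb)])
    fun v hv => hp v ?_
  rw [hl, map_mul, map_sub, eval_X, hv, sub_self, mul_zero]

theorem linear_dvd_of_eval_eq_zero {a b c : K} (hab : (a, b) ≠ 0)
    {p : MvPolynomial (Fin 2) K}
    (hp : ∀ v, eval v (C a * X 0 + C b * X 1 + C c) = 0 → eval v p = 0) :
    C a * X 0 + C b * X 1 + C c ∣ p := by
  have hvars (i j : Fin 2) (a c : K) (hij : i ≠ j) : j ∉ (C a * X i + C c).vars := fun h => by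
    have := (vars_add_subset _ _).trans
      (Finset.union_subset_union (vars_mul _ _) (vars_C (R := K)).le) h
    simp_all [vars_X]
  by_cases hb : b = 0
  · have ha : a ≠ 0 := fun ha => hab (by simp [ha, hb])
    rw [add_assoc] at hp ⊢
    exact C_mul_X_add_dvd_of_eval_eq_zero ha (hvars 1 0 b c (by decide)) hp
  · have hl : C a * X 0 + C b * X 1 + C c =
        (C b * X 1 + (C a * X 0 + C c) : MvPolynomial (Fin 2) K) := by ring
    rw [hl] at hp ⊢
    exact C_mul_X_add_dvd_of_eval_eq_zero hb (hvars 0 1 a c (by decide)) hp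

end

theorem eval_eq_zero_of_card_lt_of_linear {a b c : ℝ} (hab : (a, b) ≠ 0)
    {p : MvPolynomial (Fin 2) ℝ} {S : Finset (Fin 2 → ℝ)}
    (hS : ∀ s ∈ S, eval s (C a * X 0 + C b * X 1 + C c) = 0 ∧ eval s p = 0)
    (hcard : p.totalDegree < S.card) (v : Fin 2 → ℝ)
    (hv : eval v (C a * X 0 + C b * X 1 + C c) = 0) : eval v p = 0 := by
  obtain ⟨P, hP⟩ : S.Nonempty := Finset.card_pos.mp (by omega)
  have hn : a ^ 2 + b ^ 2 ≠ 0 := fun h => hab <| Prod.mk_eq_zero.mpr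
    ⟨by nlinarith [sq_nonneg a, sq_nonneg b], by nlinarith [sq_nonneg a, sq_nonneg b]⟩
  -- `t w` is the coordinate of `w - P` along the direction `(-b, a)` of the line.
  set t : (Fin 2 → ℝ) → ℝ := fun w => (a * (w 1 - P 1) - b * (w 0 - P 0)) / (a ^ 2 + b ^ 2)
  have hpar : ∀ w, eval w (C a * X 0 + C b * X 1 + C c) = 0 → w = P + t w • ![-b, a] := by
    intro w hw
    have hPl := (hS P hP).1
    simp only [map_add, map_mul, eval_C, eval_X] at hw hPl
    ext i; fin_cases i
    · simp [t]; field_simp; linear_combination a * (hw - hPl)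
    · simp [t]; field_simp; linear_combination b * (hw - hPl)
  rw [hpar v hv]
  refine eval_add_smul_eq_zero_of_card_lt (T := S.image t) ?_ ?_ _
  · rwa [Finset.card_image_of_injOn fun s hs s' hs' h => by
      rw [hpar s (hS s hs).1, hpar s' (hS s' hs').1, h]]
  · simp only [Finset.mem_image, forall_exists_index, and_imp]
    rintro _ s hs rfl
    rw [← hpar s (hS s hs).1]
    exact (hS s hs).2

theorem dvd_of_card_lt_of_subset_zeroSet {l p : MvPolynomial (Fin 2) ℝ} (hl : l.totalDegree = 1)
    {S : Finset (ℝ × ℝ)} (hSl : ↑S ⊆ zeroSet l) (hSp : ↑S ⊆ zeroSet p)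
    (hcard : p.totalDegree < S.card) : l ∣ p := by
  obtain ⟨a, b, c, hab, rfl⟩ := exists_eq_linear_of_totalDegree_eq_one hl
  refine linear_dvd_of_eval_eq_zero hab
    (eval_eq_zero_of_card_lt_of_linear hab (S := S.image fun s => ![s.1, s.2]) ?_ ?_)
  · simp only [Finset.mem_image, forall_exists_index, and_imp]
    rintro _ s hs rfl
    exact ⟨hSl hs, hSp hs⟩
  · rwa [Finset.card_image_of_injective]
    exact fun s s' h => Prod.ext (congrFun h 0) (congrFun h 1)

theorem stmt_15_general (d : ℕ) (L : Set (ℝ × ℝ)) (hL : IsCurve 1 L)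
    (B₀ : Finset (ℝ × ℝ)) (hB₀L : ∀ b ∈ B₀, b ∉ L)
    (hB₀card : B₀.card = Nat.choose (d + 1) 2)
    (hB₀ : ∀ C : Set (ℝ × ℝ), IsCurveLe (d - 1) C → ¬(↑B₀ ⊆ C))
    (B₁ : Finset (ℝ × ℝ)) (hB₁L : ↑B₁ ⊆ L) (hB₁card : d < B₁.card) :
    ∀ C : Set (ℝ × ℝ), IsCurveLe d C → ¬((↑(B₀ ∪ B₁) : Set (ℝ × ℝ)) ⊆ C) := by
  rintro _ ⟨e, he1, hed, p, rfl, rfl⟩ hsub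
  obtain ⟨l, hl, rfl⟩ := hL
  have hp : p ≠ 0 := by rintro rfl; simp at he1
  obtain ⟨q, rfl⟩ : l ∣ p := dvd_of_card_lt_of_subset_zeroSet hl hB₁L
    ((Finset.coe_subset.mpr Finset.subset_union_right).trans hsub) (by omega)
  have hq : q ≠ 0 := right_ne_zero_of_mul hp
  have hdeg : (l * q).totalDegree = q.totalDegree + 1 := by
    rw [totalDegree_mul_of_isDomain (left_ne_zero_of_mul hp) hq, hl, add_comm]
  have hB₀q : ↑B₀ ⊆ zeroSet q := fun s hs =>
    (mul_eq_zero.mp (by simpa [zeroSet] using hsub (Finset.mem_union_left B₁ hs))).resolve_left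
      (hB₀L s hs)
  obtain ⟨s, hs⟩ : B₀.Nonempty := by
    rw [← Finset.card_pos, hB₀card]; exact Nat.choose_pos (by omega)
  have hq1 : 1 ≤ q.totalDegree := one_le_totalDegree_of_eval_eq_zero hq (hB₀q hs)
  exact hB₀ _ ⟨_, hq1, by omega, q, rfl, rfl⟩ hB₀q

theorem stmt_15 (d : ℕ) (hd : 2 ≤ d) (L : Set (ℝ × ℝ)) (hL : IsCurve 1 L)
    (B₀ : Finset (ℝ × ℝ)) (hB₀L : ∀ b ∈ B₀, b ∉ L)
    (hB₀card : B₀.card = Nat.choose (d + 1) 2)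
    (hB₀ : ∀ C : Set (ℝ × ℝ), IsCurveLe (d - 1) C → ¬(↑B₀ ⊆ C))
    (B₁ : Finset (ℝ × ℝ)) (hB₁L : ↑B₁ ⊆ L) (hB₁card : d < B₁.card) :
    ∀ C : Set (ℝ × ℝ), IsCurveLe d C → ¬((↑(B₀ ∪ B₁) : Set (ℝ × ℝ)) ⊆ C) :=
  stmt_15_general d L hL B₀ hB₀L hB₀card hB₀ B₁ hB₁L hB₁card
end
end

section
/- Weak Bezout for real plane curves: let C₁ be a curve of degree at most d and C₂ a curve of degree at most e in ℝ^2 (zero sets of real polynomials of degrees in [1,d] and [1,e] respectively). If C₁ and C₂ have no common irreducible component, then |C₁ ∩ C₂| ≤ d·e. -/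
open scoped Classical

noncomputable section

/-!
Let `V_j` be the space of polynomials in two variables of total degree `≤ j`, of dimension
`(j + 1)(j + 2)/2`. Let `T` be a finite set of `k` common zeros of `p` and `q`, of degrees `m`
and `n`. The polynomials `a p + b q` with `a ∈ V_{n+k}`, `b ∈ V_{m+k}` form a subspace of
`V_{m+n+k}` vanishing on `T`; since evaluation on `T` maps `V_{m+n+k}` onto `K^T` (interpolation),
this subspace has codimension at least `k`. Because `p` and `q` are coprime, `a p = b q` forces
`a p ∈ p q V_k`, so the subspace has dimension at least `dim V_{n+k} + dim V_{m+k} - dim V_k`.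
Comparing dimensions gives `k ≤ m n`.
-/

open MvPolynomial Module

theorem Submodule.finrank_add_finrank_map_le {K M N : Type*} [DivisionRing K] [AddCommGroup M]
    [Module K M] [AddCommGroup N] [Module K N] {U V : Submodule K M} [FiniteDimensional K V]
    (f : M →ₗ[K] N) (hUV : U ≤ V) (hU : U ≤ LinearMap.ker f) :
    finrank K U + finrank K (V.map f) ≤ finrank K V := by
  rw [← LinearMap.range_domRestrict, ← (f.domRestrict V).finrank_range_add_finrank_ker,
    add_comm]
  gcongr
  calc finrank K U = finrank K (U.comap V.subtype) :=
        (Submodule.comapSubtypeEquivOfLe hUV).finrank_eq.symm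
    _ ≤ _ := Submodule.finrank_mono fun x hx => by simpa using hU hx

namespace MvPolynomial

variable {σ K : Type*} [Field K]

theorem two_mul_finrank_restrictTotalDegree_fin_two (j : ℕ) :
    2 * Module.finrank K (restrictTotalDegree (Fin 2) K j) = (j + 1) * (j + 2) := by
  set S := (Finset.range (j + 1)).biUnion fun i => (Finset.univ : Finset (Fin 2)).finsuppAntidiag i
  have hS : {s : Fin 2 →₀ ℕ | (s.sum fun _ e => e) ≤ j} = S := by
    ext s
    simp [S, Finsupp.sum_fintype]
  have hcard : S.card = ∑ i ∈ Finset.range (j + 1), (i + 1) := by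
    rw [Finset.card_biUnion]
    · refine Finset.sum_congr rfl fun i _ => ?_
      simp [Finset.card_finsuppAntidiag_nat_eq_choose, add_comm 1, Nat.choose_succ_self_right]
    · intro i _ i' _ hii'
      simp only [Function.onFun, Finset.disjoint_left, Finset.mem_finsuppAntidiag]
      rintro s ⟨rfl, -⟩ ⟨h, -⟩
      exact hii' h
  have gauss : ∀ j : ℕ, 2 * ∑ i ∈ Finset.range (j + 1), (i + 1) = (j + 1) * (j + 2) := by
    intro j
    induction j with
    | zero => simp
    | succ j ih => rw [Finset.sum_range_succ, mul_add, ih]; ring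
  rw [restrictTotalDegree, Module.finrank_eq_nat_card_basis (basisRestrictSupport K _), hS,
    Nat.card_coe_set_eq, Set.ncard_coe_finset, hcard, gauss]

theorem exists_totalDegree_le_one_eval_eq_one_eval_eq_zero {x y : σ → K} (hxy : x ≠ y) :
    ∃ ℓ : MvPolynomial σ K, ℓ.totalDegree ≤ 1 ∧ eval x ℓ = 1 ∧ eval y ℓ = 0 := by
  obtain ⟨i, hi⟩ := Function.ne_iff.mp hxy
  refine ⟨C (x i - y i)⁻¹ * (X i - C (y i)), ?_, ?_, by simp⟩
  · refine (totalDegree_mul _ _).trans ?_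
    rw [totalDegree_C, zero_add]
    exact (totalDegree_sub_C_le _ _).trans (totalDegree_X i).le
  · simp [inv_mul_cancel₀ (sub_ne_zero.mpr hi)]

theorem exists_totalDegree_le_eval_eq_one_eval_eq_zero (T : Finset (σ → K)) {x : σ → K}
    (hx : x ∈ T) :
    ∃ g : MvPolynomial σ K, g.totalDegree ≤ T.card - 1 ∧ eval x g = 1 ∧
      ∀ y ∈ T, y ≠ x → eval y g = 0 := by
  choose! ℓ hℓdeg hℓx hℓy using fun y (hy : y ≠ x) =>
    exists_totalDegree_le_one_eval_eq_one_eval_eq_zero hy.symm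
  refine ⟨∏ y ∈ T.erase x, ℓ y, ?_, ?_, fun y hy hyx => ?_⟩
  · calc (∏ y ∈ T.erase x, ℓ y).totalDegree ≤ ∑ y ∈ T.erase x, (ℓ y).totalDegree :=
          totalDegree_finsetProd _ _
      _ ≤ ∑ y ∈ T.erase x, 1 :=
          Finset.sum_le_sum fun y hy => hℓdeg y (Finset.ne_of_mem_erase hy)
      _ = T.card - 1 := by simp [Finset.card_erase_of_mem hx]
  · rw [map_prod]
    exact Finset.prod_eq_one fun z hz => hℓx z (Finset.ne_of_mem_erase hz)
  · rw [map_prod]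
    exact Finset.prod_eq_zero (Finset.mem_erase.mpr ⟨hyx, hy⟩) (hℓy y hyx)

theorem exists_totalDegree_le_eval_eq (T : Finset (σ → K)) (f : (σ → K) → K) :
    ∃ v : MvPolynomial σ K, v.totalDegree ≤ T.card - 1 ∧ ∀ x ∈ T, eval x v = f x := by
  choose! g hgdeg hgx hgy using fun x (hx : x ∈ T) =>
    exists_totalDegree_le_eval_eq_one_eval_eq_zero T hx
  refine ⟨∑ x ∈ T, C (f x) * g x, ?_, fun y hy => ?_⟩
  · refine (totalDegree_finsetSum _ _).trans (Finset.sup_le fun x hx => ?_)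
    exact (totalDegree_mul _ _).trans (by simpa using hgdeg x hx)
  · rw [map_sum, Finset.sum_eq_single_of_mem y hy]
    · simp [hgx y hy]
    · intro x hx hxy
      simp [hgy x hx y hy hxy.symm]

theorem restrictTotalDegree_map_pi_aeval_eq_top (T : Finset (σ → K)) {j : ℕ}
    (hj : T.card ≤ j + 1) :
    (restrictTotalDegree σ K j).map (LinearMap.pi fun x : T => (aeval x.1).toLinearMap) = ⊤ := by
  refine eq_top_iff.mpr fun f _ => ?_
  obtain ⟨v, hvdeg, hv⟩ :=
    exists_totalDegree_le_eval_eq T fun y => if h : y ∈ T then f ⟨y, h⟩ else 0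
  refine ⟨v, (mem_restrictTotalDegree _ _ _).mpr (by omega), ?_⟩
  ext x
  simp [hv x.1 x.2]

theorem map_mulLeft_inf_map_mulLeft_le {p q : MvPolynomial σ K} (hpq : IsRelPrime p q) (k : ℕ) :
    (restrictTotalDegree σ K (q.totalDegree + k)).map (LinearMap.mulLeft K p) ⊓
      (restrictTotalDegree σ K (p.totalDegree + k)).map (LinearMap.mulLeft K q) ≤
    (restrictTotalDegree σ K k).map (LinearMap.mulLeft K (p * q)) := by
  rintro x ⟨⟨a, ha, rfl⟩, ⟨b, -, hb⟩⟩
  rw [SetLike.mem_coe, mem_restrictTotalDegree] at ha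
  rcases eq_or_ne a 0 with rfl | ha0
  · simp
  obtain ⟨c, rfl⟩ : q ∣ a := hpq.symm.dvd_of_dvd_mul_left ⟨b, hb.symm⟩
  obtain ⟨hq, hc⟩ := mul_ne_zero_iff.mp ha0
  rw [totalDegree_mul_of_isDomain hq hc] at ha
  exact ⟨c, (mem_restrictTotalDegree _ _ _).mpr (by omega), by simp⟩

theorem card_le_totalDegree_mul_totalDegree {p q : MvPolynomial (Fin 2) K} (hp : p ≠ 0)
    (hq : q ≠ 0) (hpq : IsRelPrime p q) (T : Finset (Fin 2 → K))
    (hT : ∀ x ∈ T, eval x p = 0 ∧ eval x q = 0) :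
    T.card ≤ p.totalDegree * q.totalDegree := by
  set m := p.totalDegree
  set n := q.totalDegree
  set k := T.card
  let V (j : ℕ) := restrictTotalDegree (Fin 2) K j
  set A := (V (n + k)).map (LinearMap.mulLeft K p)
  set B := (V (m + k)).map (LinearMap.mulLeft K q)
  let ev : MvPolynomial (Fin 2) K →ₗ[K] T → K := LinearMap.pi fun x => (aeval x.1).toLinearMap
  have hev : (V (m + n + k)).map ev = ⊤ := restrictTotalDegree_map_pi_aeval_eq_top T (by omega)
  have hAB_le : A ⊔ B ≤ V (m + n + k) := by
    refine sup_le (Submodule.map_le_iff_le_comap.mpr fun a ha => ?_)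
      (Submodule.map_le_iff_le_comap.mpr fun b hb => ?_)
    all_goals
      simp only [Submodule.mem_comap, LinearMap.mulLeft_apply, V, mem_restrictTotalDegree] at *
      refine (totalDegree_mul _ _).trans ?_
      omega
  have hAB_ker : A ⊔ B ≤ LinearMap.ker ev := by
    refine sup_le (Submodule.map_le_iff_le_comap.mpr fun a _ => ?_)
      (Submodule.map_le_iff_le_comap.mpr fun b _ => ?_)
    all_goals
      ext x
      simp [ev, (hT x.1 x.2).1, (hT x.1 x.2).2]
  have hA : finrank K A = finrank K (V (n + k)) :=
    (Submodule.equivMapOfInjective _ (mul_right_injective₀ hp) _).finrank_eq.symm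
  have hB : finrank K B = finrank K (V (m + k)) :=
    (Submodule.equivMapOfInjective _ (mul_right_injective₀ hq) _).finrank_eq.symm
  have hAB_inf : finrank K ↥(A ⊓ B) ≤ finrank K (V k) :=
    (Submodule.finrank_mono (map_mulLeft_inf_map_mulLeft_le hpq k)).trans <|
      (Submodule.equivMapOfInjective _ (mul_right_injective₀ (mul_ne_zero hp hq)) _).finrank_eq.ge
  have hcodim := Submodule.finrank_add_finrank_map_le ev hAB_le hAB_ker
  rw [hev, finrank_top, Module.finrank_fintype_fun_eq_card, Fintype.card_coe] at hcodim
  have hsum := Submodule.finrank_sup_add_finrank_inf_eq A B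
  have dimV_mnk := two_mul_finrank_restrictTotalDegree_fin_two (K := K) (m + n + k)
  have dimV_nk := two_mul_finrank_restrictTotalDegree_fin_two (K := K) (n + k)
  have dimV_mk := two_mul_finrank_restrictTotalDegree_fin_two (K := K) (m + k)
  have dimV_k := two_mul_finrank_restrictTotalDegree_fin_two (K := K) k
  linarith

end MvPolynomial

theorem ncard_zeroSet_inter_le {p q : MvPolynomial (Fin 2) ℝ} (hp : p ≠ 0) (hq : q ≠ 0)
    (hpq : IsRelPrime p q) :
    (zeroSet p ∩ zeroSet q).ncard ≤ p.totalDegree * q.totalDegree := by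
  rcases (zeroSet p ∩ zeroSet q).finite_or_infinite with hfin | hinf
  · have he : Function.Injective fun x : ℝ × ℝ => ![x.1, x.2] :=
      (finTwoArrowEquiv ℝ).symm.injective
    rw [← Set.ncard_image_of_injective _ he, Set.ncard_eq_toFinset_card _ (hfin.image _)]
    refine card_le_totalDegree_mul_totalDegree hp hq hpq _ fun x hx => ?_
    rw [Set.Finite.mem_toFinset] at hx
    obtain ⟨y, ⟨hyp, hyq⟩, rfl⟩ := hx
    exact ⟨hyp, hyq⟩
  · simp [hinf.ncard]

theorem stmt_17 (d e : ℕ) (C₁ C₂ : Set (ℝ × ℝ)) (p q : MvPolynomial (Fin 2) ℝ)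
    (hp1 : 1 ≤ p.totalDegree) (hpd : p.totalDegree ≤ d) (hC₁ : C₁ = zeroSet p)
    (hq1 : 1 ≤ q.totalDegree) (hqe : q.totalDegree ≤ e) (hC₂ : C₂ = zeroSet q)
    (hcop : ∀ r : MvPolynomial (Fin 2) ℝ, Irreducible r → ¬(r ∣ p ∧ r ∣ q)) :
    (C₁ ∩ C₂).ncard ≤ d * e := by
  subst hC₁ hC₂
  have hp : p ≠ 0 := by rintro rfl; simp at hp1
  have hq : q ≠ 0 := by rintro rfl; simp at hq1
  have hpq : IsRelPrime p q :=
    WfDvdMonoid.isRelPrime_of_no_irreducible_factors (fun h => hp h.1) fun r hr hrp hrq =>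
      hcop r hr ⟨hrp, hrq⟩
  exact (ncard_zeroSet_inter_le hp hq hpq).trans (Nat.mul_le_mul hpd hqe)
end
end
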